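/- arXiv:1804.01230 — 8 statements merged into one kernel-verified Lean document; each statement's English description precedes it below -/
import Mathlib

section
/- Let h : ℝ^p → ℝ be a seminorm, X ∈ ℝ^{n×p}, y ∈ ℝ^n, and let β̂ minimize β ↦ ‖Xβ - y‖² + 2h(β). Write y = Xβ* + ε. Then for every u ∈ ℝ^p with ‖Xu‖ ≤ 1, we have εᵀXu - h(u) ≤ ‖X(β̂ - β*)‖. -/
/-!
Perturbing the minimizer `β̂` along `δ • u` and letting `δ → 0⁺` gives the first-order condition
`⟪y - X β̂, X u⟫ ≤ h u` (this is `Xᵀ(y - Xβ̂) ∈ ∂h(β̂)` tested against `u`). Since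
`y - X β̂ = ε - X (β̂ - β*)`, it rearranges to `⟪ε, X u⟫ - h u ≤ ⟪X (β̂ - β*), X u⟫`, and
Cauchy–Schwarz with `‖X u‖ ≤ 1` finishes.
-/

open Filter Topology

open scoped RealInnerProductSpace

variable {E F : Type*} [AddCommGroup E] [Module ℝ E] [NormedAddCommGroup F] [InnerProductSpace ℝ F]

theorem inner_residual_le_add_of_pos (h : Seminorm ℝ E) (X : E →ₗ[ℝ] F) {y : F} {βhat : E}
    (hmin : ∀ β, ‖X βhat - y‖ ^ 2 + 2 * h βhat ≤ ‖X β - y‖ ^ 2 + 2 * h β) (u : E) {δ : ℝ}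
    (hδ : 0 < δ) : ⟪y - X βhat, X u⟫ ≤ h u + δ / 2 * ‖X u‖ ^ 2 := by
  have hperturb := hmin (βhat + δ • u)
  have hexpand : ‖X (βhat + δ • u) - y‖ ^ 2
      = ‖X βhat - y‖ ^ 2 - 2 * δ * ⟪y - X βhat, X u⟫ + δ ^ 2 * ‖X u‖ ^ 2 := by
    rw [map_add, map_smul, add_sub_right_comm, norm_add_sq_real, real_inner_smul_right,
      norm_smul, Real.norm_eq_abs, mul_pow, sq_abs, ← neg_sub, inner_neg_left]
    ring
  have hpenalty : h (βhat + δ • u) ≤ h βhat + δ * h u := by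
    simpa only [map_smul_eq_mul, Real.norm_eq_abs, abs_of_pos hδ] using
      map_add_le_add h βhat (δ • u)
  rw [hexpand] at hperturb
  nlinarith

theorem inner_residual_le_of_isMinimizer (h : Seminorm ℝ E) (X : E →ₗ[ℝ] F) {y : F} {βhat : E}
    (hmin : ∀ β, ‖X βhat - y‖ ^ 2 + 2 * h βhat ≤ ‖X β - y‖ ^ 2 + 2 * h β) (u : E) :
    ⟪y - X βhat, X u⟫ ≤ h u := by
  have hlim : Tendsto (fun δ : ℝ => h u + δ / 2 * ‖X u‖ ^ 2) (𝓝[>] 0) (𝓝 (h u)) := by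
    have : Continuous fun δ : ℝ => h u + δ / 2 * ‖X u‖ ^ 2 := by fun_prop
    simpa using this.continuousWithinAt.tendsto (x := 0) (s := Set.Ioi 0)
  exact ge_of_tendsto hlim <| eventually_nhdsWithin_of_forall fun δ hδ =>
    inner_residual_le_add_of_pos h X hmin u hδ

theorem noise_barrier_lower_bound_general {n p : ℕ}
    (h : EuclideanSpace ℝ (Fin p) → ℝ)
    (h_tri : ∀ β₁ β₂, h (β₁ + β₂) ≤ h β₁ + h β₂)
    (h_homog : ∀ (a : ℝ) (β : EuclideanSpace ℝ (Fin p)), h (a • β) = |a| * h β)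
    (X : EuclideanSpace ℝ (Fin p) →ₗ[ℝ] EuclideanSpace ℝ (Fin n))
    (ε : EuclideanSpace ℝ (Fin n))
    (βstar βhat : EuclideanSpace ℝ (Fin p))
    (y : EuclideanSpace ℝ (Fin n))
    (hy : y = X βstar + ε)
    (hmin : ∀ β : EuclideanSpace ℝ (Fin p),
      ‖X βhat - y‖ ^ 2 + 2 * h βhat ≤ ‖X β - y‖ ^ 2 + 2 * h β)
    (u : EuclideanSpace ℝ (Fin p)) (hu : ‖X u‖ ≤ 1) :
    (inner ℝ ε (X u) : ℝ) - h u ≤ ‖X (βhat - βstar)‖ := by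
  let hsemi : Seminorm ℝ (EuclideanSpace ℝ (Fin p)) := Seminorm.of h h_tri h_homog
  have hoptimal : ⟪y - X βhat, X u⟫ ≤ h u := inner_residual_le_of_isMinimizer hsemi X hmin u
  have hresidual : y - X βhat = ε - X (βhat - βstar) := by
    rw [hy, map_sub]
    abel
  calc ⟪ε, X u⟫ - h u ≤ ⟪ε, X u⟫ - ⟪y - X βhat, X u⟫ := sub_le_sub_left hoptimal _
    _ = ⟪X (βhat - βstar), X u⟫ := by rw [hresidual, inner_sub_left]; ring
    _ ≤ ‖X (βhat - βstar)‖ * ‖X u‖ := real_inner_le_norm _ _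
    _ ≤ ‖X (βhat - βstar)‖ := mul_le_of_le_one_right (norm_nonneg _) hu

/-- Noise barrier lower bound: for any seminorm penalty `h`, any minimizer
`β̂` of `β ↦ ‖Xβ - y‖² + 2h(β)` with `y = Xβ* + ε`, and any `u` with `‖Xu‖ ≤ 1`,
we have `⟪ε, Xu⟫ - h(u) ≤ ‖X(β̂ - β*)‖`. -/
theorem noise_barrier_lower_bound {n p : ℕ}
    (h : EuclideanSpace ℝ (Fin p) → ℝ)
    (h_nonneg : ∀ β, 0 ≤ h β)
    (h_tri : ∀ β₁ β₂, h (β₁ + β₂) ≤ h β₁ + h β₂)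
    (h_homog : ∀ (a : ℝ) (β : EuclideanSpace ℝ (Fin p)), h (a • β) = |a| * h β)
    (X : EuclideanSpace ℝ (Fin p) →ₗ[ℝ] EuclideanSpace ℝ (Fin n))
    (ε : EuclideanSpace ℝ (Fin n))
    (βstar βhat : EuclideanSpace ℝ (Fin p))
    (y : EuclideanSpace ℝ (Fin n))
    (hy : y = X βstar + ε)
    (hmin : ∀ β : EuclideanSpace ℝ (Fin p),
      ‖X βhat - y‖ ^ 2 + 2 * h βhat ≤ ‖X β - y‖ ^ 2 + 2 * h β)
    (u : EuclideanSpace ℝ (Fin p)) (hu : ‖X u‖ ≤ 1) :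
    (inner ℝ ε (X u) : ℝ) - h u ≤ ‖X (βhat - βstar)‖ :=
  noise_barrier_lower_bound_general h h_tri h_homog X ε βstar βhat y hy hmin u hu
end

section
/- Let h be a seminorm on ℝ^p and suppose Xβ* = 0. Let β̂ minimize β ↦ ‖Xβ - ε‖² + 2h(β) (i.e., y = ε). Then ‖Xβ̂‖ = sup over u ∈ ℝ^p with ‖Xu‖ ≤ 1 of (εᵀXu - h(u)). -/
/-!
The objective `‖Xβ - ε‖² + 2 h(β)` has nonnegative one-sided derivatives at `β̂` in every
direction. In the direction `u` this gives `⟪ε - Xβ̂, Xu⟫ ≤ h(u)`, and in the direction `-β̂`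
(where `h` is linear along the ray) it gives the reverse inequality at `u = β̂`, so
`⟪ε - Xβ̂, Xβ̂⟫ = h(β̂)`. The first inequality bounds every `⟪ε, Xu⟫ - h(u)` with `‖Xu‖ ≤ 1` by
`⟪Xβ̂, Xu⟫ ≤ ‖Xβ̂‖`, and the second shows that `u = β̂ / ‖Xβ̂‖` attains this bound.
-/

open Filter Topology

section FirstOrder

variable {F : Type*} [NormedAddCommGroup F] [InnerProductSpace ℝ F]

lemma le_inner_of_forall_norm_sq_le {r v : F} {c : ℝ}
    (H : ∀ t : ℝ, 0 < t → t < 1 → ‖r‖ ^ 2 + 2 * t * c ≤ ‖r + t • v‖ ^ 2) :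
    c ≤ inner ℝ r v := by
  have hdiff : ∀ t : ℝ, 0 < t → t < 1 → 2 * c ≤ 2 * inner ℝ r v + t * ‖v‖ ^ 2 := by
    intro t ht0 ht1
    have hexp : ‖r + t • v‖ ^ 2 = ‖r‖ ^ 2 + 2 * t * inner ℝ r v + t ^ 2 * ‖v‖ ^ 2 := by
      rw [norm_add_sq_real, real_inner_smul_right, norm_smul, mul_pow, Real.norm_eq_abs, sq_abs]
      ring
    have := H t ht0 ht1
    rw [hexp] at this
    nlinarith
  have hlim : Tendsto (fun t : ℝ => 2 * inner ℝ r v + t * ‖v‖ ^ 2) (𝓝[>] 0)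
      (𝓝 (2 * inner ℝ r v)) := by
    have hcont : Continuous fun t : ℝ => 2 * inner ℝ r v + t * ‖v‖ ^ 2 := by fun_prop
    simpa using (hcont.tendsto 0).mono_left nhdsWithin_le_nhds
  have hev : ∀ᶠ t in 𝓝[>] (0 : ℝ), 2 * c ≤ 2 * inner ℝ r v + t * ‖v‖ ^ 2 := by
    filter_upwards [self_mem_nhdsWithin, Ioo_mem_nhdsGT (zero_lt_one' ℝ)] with t ht0 ht1
    exact hdiff t ht0 ht1.2
  linarith [ge_of_tendsto hlim hev]

end FirstOrder

section PenalizedLeastSquares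

variable {E F : Type*} [AddCommGroup E] [Module ℝ E]
  [NormedAddCommGroup F] [InnerProductSpace ℝ F]
  {q : Seminorm ℝ E} {X : E →ₗ[ℝ] F} {ε : F} {βhat : E}

lemma inner_residual_le_seminorm
    (hmin : ∀ β, ‖X βhat - ε‖ ^ 2 + 2 * q βhat ≤ ‖X β - ε‖ ^ 2 + 2 * q β) (u : E) :
    inner ℝ (ε - X βhat) (X u) ≤ q u := by
  suffices -q u ≤ inner ℝ (X βhat - ε) (X u) by
    rw [← neg_sub, inner_neg_left]
    linarith
  refine le_inner_of_forall_norm_sq_le fun t ht0 _ => ?_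
  have hq : q (βhat + t • u) ≤ q βhat + t * q u := by
    calc q (βhat + t • u) ≤ q βhat + q (t • u) := map_add_le_add q _ _
      _ = q βhat + t * q u := by rw [map_smul_eq_mul, Real.norm_of_nonneg ht0.le]
  have hX : X (βhat + t • u) - ε = X βhat - ε + t • X u := by
    rw [map_add, map_smul]
    abel
  have := hmin (βhat + t • u)
  rw [hX] at this
  linarith

lemma seminorm_le_inner_residual
    (hmin : ∀ β, ‖X βhat - ε‖ ^ 2 + 2 * q βhat ≤ ‖X β - ε‖ ^ 2 + 2 * q β) :
    q βhat ≤ inner ℝ (ε - X βhat) (X βhat) := by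
  have hinner : inner ℝ (ε - X βhat) (X βhat) = inner ℝ (X βhat - ε) (-X βhat) := by
    rw [inner_neg_right, ← inner_neg_left, neg_sub]
  rw [hinner]
  refine le_inner_of_forall_norm_sq_le fun t ht0 ht1 => ?_
  have hq : q ((1 - t) • βhat) = (1 - t) * q βhat := by
    rw [map_smul_eq_mul, Real.norm_of_nonneg (by linarith)]
  have hX : X ((1 - t) • βhat) - ε = X βhat - ε + t • -X βhat := by
    rw [map_smul]
    module
  have := hmin ((1 - t) • βhat)
  rw [hX, hq] at this
  linarith

lemma isGreatest_inner_sub_seminorm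
    (hmin : ∀ β, ‖X βhat - ε‖ ^ 2 + 2 * q βhat ≤ ‖X β - ε‖ ^ 2 + 2 * q β) :
    IsGreatest (Set.range fun u : {u : E // ‖X u‖ ≤ 1} => inner ℝ ε (X u.1) - q u.1)
      ‖X βhat‖ := by
  have hres : ∀ u, inner ℝ ε (X u) - q u ≤ inner ℝ (X βhat) (X u) := fun u => by
    have := inner_residual_le_seminorm hmin u
    rw [inner_sub_left] at this
    linarith
  have hself : inner ℝ ε (X βhat) - q βhat = ‖X βhat‖ ^ 2 := by
    have := le_antisymm (inner_residual_le_seminorm hmin βhat) (seminorm_le_inner_residual hmin)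
    rw [inner_sub_left, real_inner_self_eq_norm_sq] at this
    linarith
  constructor
  · -- The maximiser `β̂ / ‖Xβ̂‖`; if `Xβ̂ = 0` it is `0` (as `0⁻¹ = 0`), which still attains `0`.
    set c := ‖X βhat‖⁻¹ with hc_def
    have hc : 0 ≤ c := inv_nonneg.mpr (norm_nonneg _)
    refine ⟨⟨c • βhat, ?_⟩, ?_⟩
    · rw [map_smul, norm_smul, Real.norm_of_nonneg hc]
      exact inv_mul_le_one_of_le₀ le_rfl (norm_nonneg _)
    · simp only [map_smul, real_inner_smul_right, map_smul_eq_mul, Real.norm_of_nonneg hc]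
      rw [← mul_sub, hself, hc_def, pow_two, ← mul_assoc, inv_mul_mul_self]
  · rintro _ ⟨⟨u, hu⟩, rfl⟩
    calc inner ℝ ε (X u) - q u ≤ inner ℝ (X βhat) (X u) := hres u
      _ ≤ ‖X βhat‖ * ‖X u‖ := real_inner_le_norm _ _
      _ ≤ ‖X βhat‖ := mul_le_of_le_one_right (norm_nonneg _) hu

end PenalizedLeastSquares

theorem noise_barrier_equality_no_signal_general {n p : ℕ}
    (h : EuclideanSpace ℝ (Fin p) → ℝ)
    (h_tri : ∀ β₁ β₂, h (β₁ + β₂) ≤ h β₁ + h β₂)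
    (h_homog : ∀ (a : ℝ) (β : EuclideanSpace ℝ (Fin p)), h (a • β) = |a| * h β)
    (X : EuclideanSpace ℝ (Fin p) →ₗ[ℝ] EuclideanSpace ℝ (Fin n))
    (ε : EuclideanSpace ℝ (Fin n))
    (βhat : EuclideanSpace ℝ (Fin p))
    (hmin : ∀ β : EuclideanSpace ℝ (Fin p),
      ‖X βhat - ε‖ ^ 2 + 2 * h βhat ≤ ‖X β - ε‖ ^ 2 + 2 * h β) :
    ‖X βhat‖ = ⨆ u : {u : EuclideanSpace ℝ (Fin p) // ‖X u‖ ≤ 1},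
      ((inner ℝ ε (X u.1) : ℝ) - h u.1) :=
  let q : Seminorm ℝ (EuclideanSpace ℝ (Fin p)) := Seminorm.of h h_tri h_homog
  (isGreatest_inner_sub_seminorm (q := q) hmin).csSup_eq.symm

/-- If `Xβ* = 0` (equivalently, `y = ε`), then the prediction error of the
seminorm-penalized least squares estimator equals the noise barrier:
`‖Xβ̂‖ = sup_{u : ‖Xu‖ ≤ 1} (⟪ε, Xu⟫ - h(u))`. -/
theorem noise_barrier_equality_no_signal {n p : ℕ}
    (h : EuclideanSpace ℝ (Fin p) → ℝ)
    (h_nonneg : ∀ β, 0 ≤ h β)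
    (h_tri : ∀ β₁ β₂, h (β₁ + β₂) ≤ h β₁ + h β₂)
    (h_homog : ∀ (a : ℝ) (β : EuclideanSpace ℝ (Fin p)), h (a • β) = |a| * h β)
    (X : EuclideanSpace ℝ (Fin p) →ₗ[ℝ] EuclideanSpace ℝ (Fin n))
    (ε : EuclideanSpace ℝ (Fin n))
    (βhat : EuclideanSpace ℝ (Fin p))
    (hmin : ∀ β : EuclideanSpace ℝ (Fin p),
      ‖X βhat - ε‖ ^ 2 + 2 * h βhat ≤ ‖X β - ε‖ ^ 2 + 2 * h β) :
    ‖X βhat‖ = ⨆ u : {u : EuclideanSpace ℝ (Fin p) // ‖X u‖ ≤ 1},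
      ((inner ℝ ε (X u.1) : ℝ) - h u.1) :=
  noise_barrier_equality_no_signal_general h h_tri h_homog X ε βhat hmin
end

section
/- Let h be a seminorm on ℝ^p, X ∈ ℝ^{n×p}, and let β* be a minimizer of h over {β : Xβ = Xβ*}. If β* ≠ 0, then h(β*)/‖Xβ*‖ ≤ LSB(β*) < +∞, where LSB(β*) = sup_{β : Xβ ≠ Xβ*} (h(β*) - h(β))/‖X(β* - β)‖. In particular, since β* minimizes h on the affine set {β : Xβ = Xβ*}, there exists a subgradient d of h at β* of the form d = Xᵀλ₀ for some λ₀ ∈ ℝ^n, and LSB(β*) ≤ ‖λ₀‖. -/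
/-!
Since `β*` minimizes `h` on `β* + ker X`, the functional `k + c • β* ↦ c * h β*` on
`ker X ⊔ ℝ ∙ β*` is dominated by `h`. Hahn–Banach extends it to `d ≤ h` with `d β* = h β*`
vanishing on `ker X`; such a `d` is a subgradient of `h` at `β*` and factors as `⟪λ₀, X ·⟫`.
Cauchy–Schwarz bounds every quotient defining LSB by `‖λ₀‖`, and the quotient at `β = 0` is
`h β* / ‖X β*‖`.
-/

open Module

section

variable {E F : Type*} [AddCommGroup E] [Module ℝ E]

theorem Seminorm.smul_le_apply_add_of_isMinOn [AddCommGroup F] [Module ℝ F] (s : Seminorm ℝ E)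
    (X : E →ₗ[ℝ] F) {x : E} (hmin : IsMinOn s {y | X y = X x} x) {k : E}
    (hk : k ∈ LinearMap.ker X) (c : ℝ) :
    c * s x ≤ s (k + c • x) := by
  rcases le_or_gt c 0 with hc | hc
  · exact (mul_nonpos_of_nonpos_of_nonneg hc (apply_nonneg s x)).trans (apply_nonneg s _)
  · have hfiber : X (c⁻¹ • k + x) = X x := by
      rw [map_add, map_smul, LinearMap.mem_ker.mp hk, smul_zero, zero_add]
    calc c * s x ≤ c * s (c⁻¹ • k + x) := by gcongr; exact hmin hfiber
      _ = s (c • (c⁻¹ • k + x)) := by rw [map_smul_eq_mul, Real.norm_of_nonneg hc.le]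
      _ = s (k + c • x) := by rw [smul_add, smul_inv_smul₀ hc.ne']

theorem Seminorm.exists_dual_le_of_isMinOn [AddCommGroup F] [Module ℝ F] (s : Seminorm ℝ E)
    (X : E →ₗ[ℝ] F) {x : E} (hx : X x ≠ 0) (hmin : IsMinOn s {y | X y = X x} x) :
    ∃ d : Dual ℝ E, (∀ y, d y ≤ s y) ∧ d x = s x ∧ LinearMap.ker X ≤ LinearMap.ker d := by
  let f₀ : E →ₗ.[ℝ] ℝ := (0 : Dual ℝ E).toPMap (LinearMap.ker X)
  let f : E →ₗ.[ℝ] ℝ := f₀.supSpanSingleton x (s x) hx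
  have hdom : f.domain = LinearMap.ker X ⊔ ℝ ∙ x := f₀.domain_supSpanSingleton x (s x) hx
  have hmem : ∀ k ∈ LinearMap.ker X, ∀ c : ℝ, k + c • x ∈ f.domain := fun k hk c =>
    hdom ▸ Submodule.add_mem_sup hk (Submodule.smul_mem _ c (Submodule.mem_span_singleton_self x))
  have hf : ∀ (y : f.domain) (k : E) (c : ℝ), k ∈ LinearMap.ker X → (y : E) = k + c • x →
      f y = c * s x := by
    rintro ⟨y, hy⟩ k c hk rfl
    exact (f₀.supSpanSingleton_apply_mk x (s x) hx k hk c).trans (by simp [f₀])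
  obtain ⟨d, hdf, hds⟩ := exists_extension_of_le_sublinear f s
    (fun c hc y => by rw [map_smul_eq_mul, Real.norm_of_nonneg hc.le]) (map_add_le_add s) (by
      rintro ⟨y, hy⟩
      obtain ⟨k, hk, _, hc, rfl⟩ := Submodule.mem_sup.mp (hdom ▸ hy)
      obtain ⟨c, rfl⟩ := Submodule.mem_span_singleton.mp hc
      rw [hf _ k c hk rfl]
      exact s.smul_le_apply_add_of_isMinOn X hmin hk c)
  refine ⟨d, hds, ?_, fun k hk => ?_⟩
  · simpa using (hdf ⟨_, hmem 0 (zero_mem _) 1⟩).trans (hf _ 0 1 (zero_mem _) rfl)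
  · simpa using (hdf ⟨_, hmem k hk 0⟩).trans (hf _ k 0 hk rfl)

theorem LinearMap.exists_inner_apply_eq_of_ker_le [NormedAddCommGroup F]
    [InnerProductSpace ℝ F] [FiniteDimensional ℝ F] (X : E →ₗ[ℝ] F) {d : Dual ℝ E}
    (hd : LinearMap.ker X ≤ LinearMap.ker d) : ∃ μ : F, ∀ v, inner ℝ μ (X v) = d v := by
  have hd' : d ∈ X.dualMap.range := by
    rw [LinearMap.range_dualMap_eq_dualAnnihilator_ker, Submodule.mem_dualAnnihilator]
    exact fun v hv => hd hv
  obtain ⟨φ, rfl⟩ := hd'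
  exact ⟨(InnerProductSpace.toDual ℝ F).symm (LinearMap.toContinuousLinearMap φ),
    fun v => InnerProductSpace.toDual_symm_apply⟩

theorem Seminorm.exists_inner_le_sub_of_isMinOn [NormedAddCommGroup F]
    [InnerProductSpace ℝ F] [FiniteDimensional ℝ F] (s : Seminorm ℝ E) (X : E →ₗ[ℝ] F) {x : E}
    (hx : X x ≠ 0) (hmin : IsMinOn s {y | X y = X x} x) :
    ∃ μ : F, ∀ y, inner ℝ μ (X (y - x)) ≤ s y - s x := by
  obtain ⟨d, hds, hdx, hker⟩ := s.exists_dual_le_of_isMinOn X hx hmin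
  obtain ⟨μ, hμ⟩ := X.exists_inner_apply_eq_of_ker_le hker
  refine ⟨μ, fun y => ?_⟩
  rw [hμ, map_sub, hdx]
  exact sub_le_sub_right (hds y) _

theorem div_norm_le_norm_of_inner_le_sub [NormedAddCommGroup F]
    [InnerProductSpace ℝ F] (f : E → ℝ) (X : E →ₗ[ℝ] F) {x : E} {μ : F}
    (hμ : ∀ y, inner ℝ μ (X (y - x)) ≤ f y - f x) (y : E) :
    (f x - f y) / ‖X (x - y)‖ ≤ ‖μ‖ := by
  refine div_le_of_le_mul₀ (norm_nonneg _) (norm_nonneg _) ?_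
  calc f x - f y ≤ inner ℝ μ (X (x - y)) := by
        rw [← neg_sub y x, map_neg, inner_neg_right]
        linarith [hμ y]
    _ ≤ ‖μ‖ * ‖X (x - y)‖ := real_inner_le_norm _ _

end

theorem lsb_finite_and_lower_bound_general {n p : ℕ}
    (h : EuclideanSpace ℝ (Fin p) → ℝ)
    (h_tri : ∀ β₁ β₂, h (β₁ + β₂) ≤ h β₁ + h β₂)
    (h_homog : ∀ (a : ℝ) (β : EuclideanSpace ℝ (Fin p)), h (a • β) = |a| * h β)
    (X : EuclideanSpace ℝ (Fin p) →ₗ[ℝ] EuclideanSpace ℝ (Fin n))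
    (βstar : EuclideanSpace ℝ (Fin p)) (hXβ : X βstar ≠ 0)
    (hmin : ∀ β : EuclideanSpace ℝ (Fin p), X β = X βstar → h βstar ≤ h β) :
    ∃ lam₀ : EuclideanSpace ℝ (Fin n),
      (∀ β : EuclideanSpace ℝ (Fin p),
          (inner ℝ lam₀ (X (β - βstar)) : ℝ) ≤ h β - h βstar) ∧
      BddAbove (Set.range fun β : {β : EuclideanSpace ℝ (Fin p) // X β ≠ X βstar} =>
        (h βstar - h β.1) / ‖X (βstar - β.1)‖) ∧
      h βstar / ‖X βstar‖ ≤
        (⨆ β : {β : EuclideanSpace ℝ (Fin p) // X β ≠ X βstar},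
          (h βstar - h β.1) / ‖X (βstar - β.1)‖) ∧
      (⨆ β : {β : EuclideanSpace ℝ (Fin p) // X β ≠ X βstar},
          (h βstar - h β.1) / ‖X (βstar - β.1)‖) ≤ ‖lam₀‖ := by
  let s : Seminorm ℝ (EuclideanSpace ℝ (Fin p)) :=
    Seminorm.of h h_tri fun a β => by rw [h_homog, Real.norm_eq_abs]
  obtain ⟨lam₀, hsub⟩ := s.exists_inner_le_sub_of_isMinOn X hXβ hmin
  have hratio := div_norm_le_norm_of_inner_le_sub h X hsub
  have hbdd : BddAbove (Set.range fun β : {β // X β ≠ X βstar} =>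
      (h βstar - h β.1) / ‖X (βstar - β.1)‖) := ⟨‖lam₀‖, by rintro _ ⟨β, rfl⟩; exact hratio β⟩
  have h0 : X 0 ≠ X βstar := by rw [map_zero]; exact hXβ.symm
  have : Nonempty {β // X β ≠ X βstar} := ⟨⟨0, h0⟩⟩
  refine ⟨lam₀, hsub, hbdd, ?_, ciSup_le fun β => hratio β⟩
  simpa [show h 0 = 0 from map_zero s] using le_ciSup hbdd ⟨0, h0⟩

/-- If `β* ≠ 0` minimizes the seminorm `h` over `{β : Xβ = Xβ*}` and
`Xβ* ≠ 0`, then `h(β*)/‖Xβ*‖ ≤ LSB(β*) < ∞`; moreover there is a subgradient of `h`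
at `β*` of the form `Xᵀλ₀` and `LSB(β*) ≤ ‖λ₀‖`. -/
theorem lsb_finite_and_lower_bound {n p : ℕ}
    (h : EuclideanSpace ℝ (Fin p) → ℝ)
    (h_nonneg : ∀ β, 0 ≤ h β)
    (h_tri : ∀ β₁ β₂, h (β₁ + β₂) ≤ h β₁ + h β₂)
    (h_homog : ∀ (a : ℝ) (β : EuclideanSpace ℝ (Fin p)), h (a • β) = |a| * h β)
    (X : EuclideanSpace ℝ (Fin p) →ₗ[ℝ] EuclideanSpace ℝ (Fin n))
    (βstar : EuclideanSpace ℝ (Fin p)) (hβ : βstar ≠ 0) (hXβ : X βstar ≠ 0)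
    (hmin : ∀ β : EuclideanSpace ℝ (Fin p), X β = X βstar → h βstar ≤ h β) :
    ∃ lam₀ : EuclideanSpace ℝ (Fin n),
      (∀ β : EuclideanSpace ℝ (Fin p),
          (inner ℝ lam₀ (X (β - βstar)) : ℝ) ≤ h β - h βstar) ∧
      BddAbove (Set.range fun β : {β : EuclideanSpace ℝ (Fin p) // X β ≠ X βstar} =>
        (h βstar - h β.1) / ‖X (βstar - β.1)‖) ∧
      h βstar / ‖X βstar‖ ≤
        (⨆ β : {β : EuclideanSpace ℝ (Fin p) // X β ≠ X βstar},
          (h βstar - h β.1) / ‖X (βstar - β.1)‖) ∧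
      (⨆ β : {β : EuclideanSpace ℝ (Fin p) // X β ≠ X βstar},
          (h βstar - h β.1) / ‖X (βstar - β.1)‖) ≤ ‖lam₀‖ :=
  lsb_finite_and_lower_bound_general h h_tri h_homog X βstar hXβ hmin
end

section
/- Let X ∈ ℝ^{n×p} satisfy max_{j=1,...,p} (1/n)‖Xe_j‖² ≤ 1 (normalized columns). Let T ⊂ {1,...,p} be nonempty and c > 0. Then the compatibility constant φ(c,T) := inf over u ∈ ℝ^p with ‖u_{T^c}‖₁ < c‖u_T‖₁ of √|T| ‖Xu‖ / (√n (‖u_T‖₁ - (1/c)‖u_{T^c}‖₁)) satisfies φ(c,T) ≤ 1. -/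
/-!
A sign vector `z` supported on `T` has `‖z_T‖₁ = |T|` and `z_{Tᶜ} = 0`, so its ratio
is `√|T| ‖Xz‖ / (√n |T|)`. Choosing the signs one at a time, each against the inner
product of the new column with the current `Xz`, keeps `‖Xz‖² ≤ ∑_{j ∈ T} ‖Xe_j‖² ≤ n|T|`
(a derandomised Rademacher average), so the ratio is at most `1`.
-/

open Finset

section SignVector

variable {E : Type*} [NormedAddCommGroup E] [InnerProductSpace ℝ E]

theorem exists_abs_eq_one_norm_add_smul_sq_le (a b : E) :
    ∃ ε : ℝ, |ε| = 1 ∧ ‖a + ε • b‖ ^ 2 ≤ ‖a‖ ^ 2 + ‖b‖ ^ 2 := by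
  obtain ⟨ε, hε, hε_inner⟩ : ∃ ε : ℝ, |ε| = 1 ∧ ε * inner ℝ a b ≤ 0 := by
    rcases le_total 0 (inner ℝ a b) with h | h
    exacts [⟨-1, by norm_num, by linarith⟩, ⟨1, by norm_num, by linarith⟩]
  refine ⟨ε, hε, ?_⟩
  rw [norm_add_sq_real, real_inner_smul_right, norm_smul, Real.norm_eq_abs, hε, one_mul]
  linarith

theorem exists_sign_vector_norm_sq_le {ι : Type*} [DecidableEq ι] (A : (ι → ℝ) →ₗ[ℝ] E)
    (s : Finset ι) :
    ∃ z : ι → ℝ, (∀ j ∈ s, |z j| = 1) ∧ (∀ j ∉ s, z j = 0) ∧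
      ‖A z‖ ^ 2 ≤ ∑ j ∈ s, ‖A (Pi.single j 1)‖ ^ 2 := by
  induction s using Finset.induction_on with
  | empty => exact ⟨0, by simp, by simp, by simp⟩
  | @insert a s ha ih =>
    obtain ⟨z, hz_sign, hz_zero, hz_norm⟩ := ih
    obtain ⟨ε, hε, hε_norm⟩ :=
      exists_abs_eq_one_norm_add_smul_sq_le (A z) (A (Pi.single a 1))
    refine ⟨z + ε • Pi.single a 1, fun j hj => ?_, fun j hj => ?_, ?_⟩
    · obtain rfl | hj := mem_insert.mp hj
      · simp [hz_zero j ha, hε]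
      · simp [Pi.single_eq_of_ne (ne_of_mem_of_not_mem hj ha), hz_sign j hj]
    · have hja : j ≠ a := fun h => hj (h ▸ mem_insert_self a s)
      simp [Pi.single_eq_of_ne hja, hz_zero j fun h => hj (mem_insert_of_mem h)]
    · rw [map_add, map_smul, sum_insert ha]
      linarith

end SignVector

theorem Matrix.exists_sign_vector_sum_mulVec_sq_le {m ι : Type*} [Fintype m] [Fintype ι]
    [DecidableEq ι] (X : Matrix m ι ℝ) (s : Finset ι) :
    ∃ z : ι → ℝ, (∀ j ∈ s, |z j| = 1) ∧ (∀ j ∉ s, z j = 0) ∧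
      ∑ i, X.mulVec z i ^ 2 ≤ ∑ j ∈ s, ∑ i, X i j ^ 2 := by
  have norm_sq (v : m → ℝ) : ‖WithLp.toLp 2 v‖ ^ 2 = ∑ i, v i ^ 2 := by
    simp [EuclideanSpace.norm_sq_eq]
  obtain ⟨z, hz_sign, hz_zero, hz_norm⟩ := exists_sign_vector_norm_sq_le
    ((WithLp.linearEquiv 2 ℝ (m → ℝ)).symm.toLinearMap ∘ₗ X.mulVecLin) s
  refine ⟨z, hz_sign, hz_zero, ?_⟩
  simpa [norm_sq, Matrix.mulVec_single] using hz_norm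

theorem Real.ciInf_le_of_forall_nonneg {ι : Sort*} {f : ι → ℝ} (hf : ∀ i, 0 ≤ f i)
    (i : ι) :
    ⨅ i, f i ≤ f i :=
  ciInf_le ⟨0, Set.forall_mem_range.mpr hf⟩ i

theorem Real.sqrt_mul_sqrt_div_le_one {k N q : ℝ} (hk : 0 < k) (hN : 0 < N) (hq : q ≤ N * k) :
    √k * √q / (√N * k) ≤ 1 := by
  rw [div_le_one (by positivity)]
  calc √k * √q ≤ √k * √(N * k) := by gcongr
    _ = √N * k := by rw [Real.sqrt_mul hN.le, mul_left_comm, Real.mul_self_sqrt hk.le]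

/-- If the columns of `X` are normalized (`(1/n)‖Xe_j‖² ≤ 1` for all `j`),
then for any nonempty `T ⊆ {1,...,p}` and any `c > 0`, the compatibility constant
`φ(c,T)` is at most `1`. -/
theorem compatibility_constant_le_one {n p : ℕ} (hn : 0 < n)
    (X : Matrix (Fin n) (Fin p) ℝ)
    (hnorm : ∀ j : Fin p, (1 / (n : ℝ)) * ∑ i, (X i j) ^ 2 ≤ 1)
    (T : Finset (Fin p)) (hT : T.Nonempty) (c : ℝ) (hc : 0 < c) :
    (⨅ u : {u : Fin p → ℝ // ∑ j ∈ Tᶜ, |u j| < c * ∑ j ∈ T, |u j|},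
      (Real.sqrt (T.card) * Real.sqrt (∑ i, (X.mulVec u.1 i) ^ 2)) /
        (Real.sqrt (n : ℝ) *
          ((∑ j ∈ T, |u.1 j|) - (1 / c) * ∑ j ∈ Tᶜ, |u.1 j|))) ≤ 1 := by
  have hn' : (0 : ℝ) < n := by exact_mod_cast hn
  have hT' : (0 : ℝ) < T.card := by exact_mod_cast hT.card_pos
  obtain ⟨z, hz_sign, hz_zero, hXz⟩ := X.exists_sign_vector_sum_mulVec_sq_le T
  have hXz_le : ∑ i, X.mulVec z i ^ 2 ≤ n * T.card := by
    have hcol (j : Fin p) : ∑ i, X i j ^ 2 ≤ n := by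
      simpa [one_div, inv_mul_le_iff₀ hn'] using hnorm j
    calc ∑ i, X.mulVec z i ^ 2 ≤ ∑ j ∈ T, ∑ i, X i j ^ 2 := hXz
      _ ≤ ∑ _j ∈ T, (n : ℝ) := sum_le_sum fun j _ => hcol j
      _ = n * T.card := by rw [sum_const, nsmul_eq_mul, mul_comm]
  have hz_T : ∑ j ∈ T, |z j| = T.card := by simp [sum_congr rfl hz_sign]
  have hz_Tc : ∑ j ∈ Tᶜ, |z j| = 0 :=
    sum_eq_zero fun j hj => by simp [hz_zero j (mem_compl.mp hj)]
  have hz_cone : ∑ j ∈ Tᶜ, |z j| < c * ∑ j ∈ T, |z j| := by rw [hz_T, hz_Tc]; positivity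
  refine (Real.ciInf_le_of_forall_nonneg (fun u => ?_) ⟨z, hz_cone⟩).trans ?_
  · have h_cone : 1 / c * ∑ j ∈ Tᶜ, |u.1 j| ≤ ∑ j ∈ T, |u.1 j| := by
      rw [one_div, inv_mul_le_iff₀ hc]; exact u.2.le
    have := sub_nonneg.mpr h_cone
    positivity
  rw [hz_T, hz_Tc, mul_zero, sub_zero]
  exact Real.sqrt_mul_sqrt_div_le_one hT' hn' hXz_le
end

section
/- Let g₁,...,g_p be random variables (not necessarily independent) such that for a = ±1 and each j, P(a g_j > σt) ≤ Q(t) for all t > 0, where Q is the standard normal survival function. Let μ > 0, let d ∈ {1,...,p}, and let g₁↓ ≥ ... ≥ g_p↓ be a non-increasing rearrangement of (|g₁|,...,|g_p|). Then the random variable Z² := (1/(2dσ²)) Σ_{j=1}^d (g_j↓ - μ)₊² satisfies E[Z²] ≤ log E[e^{Z²}] ≤ log(1 + (2p/d)·φ(μ/σ)/(μ/σ)³) ≤ (2p/d)·φ(μ/σ)/(μ/σ)³. -/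
/-!
Write `m = μ / σ`. For one signed variable `X = ± g_j`, the layer-cake formula gives
`E[exp ((X - μ)₊² / (2σ²)) - 1] = ∫₀^∞ r exp (r² / 2) P(X > μ + σ r) dr`, and the Gaussian
tail bound `Q(m + r) ≤ φ(m + r) / m` turns the integrand into `φ(m) / m · r exp (-m r)`, whose
integral is `φ(m) / m³`. Jensen's inequality for the average of the top `d` terms bounds `e^{Z²}`
by `1 + (1/d) ∑_{j ≤ d} (exp ((g_j↓ - μ)₊² / (2σ²)) - 1)`, and since `g_j↓ = |g_k|` for distinct
`k`, this sum is at most the sum of the same nonnegative quantity over all `2p` variables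
`± g_k`. Jensen for the integral and `log (1 + x) ≤ x` give the outer inequalities.
-/

open MeasureTheory ProbabilityTheory Real Set Filter Topology

lemma hasDerivAt_neg_exp_neg_sq_div_two (u : ℝ) :
    HasDerivAt (fun u : ℝ => -exp (-u ^ 2 / 2)) (u * exp (-u ^ 2 / 2)) u := by
  have h : HasDerivAt (fun u : ℝ => -u ^ 2 / 2) (-u) u :=
    ((hasDerivAt_pow 2 u).neg.div_const 2).congr_deriv (by ring)
  exact h.exp.neg.congr_deriv (by ring)

lemma tendsto_neg_exp_neg_sq_div_two :
    Tendsto (fun u : ℝ => -exp (-u ^ 2 / 2)) atTop (𝓝 0) := by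
  have : Tendsto (fun u : ℝ => -u ^ 2 / 2) atTop atBot :=
    (tendsto_neg_atTop_atBot.comp (tendsto_pow_atTop two_ne_zero)).atBot_div_const two_pos
  simpa using (tendsto_exp_atBot.comp this).neg

lemma integrableOn_Ioi_mul_exp_neg_sq_div_two {t : ℝ} (ht : 0 ≤ t) :
    IntegrableOn (fun u => u * exp (-u ^ 2 / 2)) (Ioi t) :=
  integrableOn_Ioi_deriv_of_nonneg' (fun u _ => hasDerivAt_neg_exp_neg_sq_div_two u)
    (fun _ hu => mul_nonneg (ht.trans hu.out.le) (exp_pos _).le) tendsto_neg_exp_neg_sq_div_two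

lemma integral_Ioi_mul_exp_neg_sq_div_two {t : ℝ} (ht : 0 ≤ t) :
    ∫ u in Ioi t, u * exp (-u ^ 2 / 2) = exp (-t ^ 2 / 2) := by
  rw [integral_Ioi_of_hasDerivAt_of_nonneg' (fun u _ => hasDerivAt_neg_exp_neg_sq_div_two u)
    (fun _ hu => mul_nonneg (ht.trans hu.out.le) (exp_pos _).le) tendsto_neg_exp_neg_sq_div_two]
  ring

lemma gaussian_tail_le {m t : ℝ} (hm : 0 < m) (hmt : m ≤ t) :
    ∫ u in Ioi t, exp (-u ^ 2 / 2) / √(2 * π) ≤ exp (-t ^ 2 / 2) / √(2 * π) / m := by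
  have ht : 0 ≤ t := hm.le.trans hmt
  have hint : Integrable fun u : ℝ => exp (-u ^ 2 / 2) := by
    simpa [neg_div, div_eq_inv_mul] using integrable_exp_neg_mul_sq (b := 1 / 2) (by norm_num)
  rw [integral_div, div_right_comm]
  gcongr
  calc ∫ u in Ioi t, exp (-u ^ 2 / 2)
      ≤ ∫ u in Ioi t, u * exp (-u ^ 2 / 2) / m := by
        refine setIntegral_mono_on hint.integrableOn
          ((integrableOn_Ioi_mul_exp_neg_sq_div_two ht).div_const _) measurableSet_Ioi
          fun u hu => ?_
        rw [le_div_iff₀ hm, mul_comm]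
        exact mul_le_mul_of_nonneg_right (hmt.trans hu.out.le) (exp_pos _).le
    _ = exp (-t ^ 2 / 2) / m := by
        rw [integral_div, integral_Ioi_mul_exp_neg_sq_div_two ht]

lemma integral_Ioi_zero_mul_exp_neg_mul {m : ℝ} (hm : 0 < m) :
    ∫ r in Ioi 0, r * exp (-(m * r)) = 1 / m ^ 2 := by
  have := integral_rpow_mul_exp_neg_mul_Ioi (a := 2) two_pos hm
  norm_num at this
  simpa using this

lemma integrableOn_Ioi_zero_mul_exp_neg_mul {m : ℝ} (hm : 0 < m) :
    IntegrableOn (fun r => r * exp (-(m * r))) (Ioi 0) :=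
  Integrable.of_integral_ne_zero (by rw [integral_Ioi_zero_mul_exp_neg_mul hm]; positivity)

lemma mul_exp_sq_div_two_mul_gaussian (m r : ℝ) :
    r * exp (r ^ 2 / 2) * (exp (-(m + r) ^ 2 / 2) / √(2 * π) / m) =
      exp (-m ^ 2 / 2) / √(2 * π) / m * (r * exp (-(m * r))) := by
  have : exp (r ^ 2 / 2) * exp (-(m + r) ^ 2 / 2) = exp (-m ^ 2 / 2) * exp (-(m * r)) := by
    rw [← exp_add, ← exp_add]; ring_nf
  linear_combination r / √(2 * π) / m * this

lemma integral_mul_exp_sq_div_two (c : ℝ) :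
    ∫ r in (0 : ℝ)..c, r * exp (r ^ 2 / 2) = exp (c ^ 2 / 2) - 1 := by
  have hderiv (r : ℝ) : HasDerivAt (fun r : ℝ => exp (r ^ 2 / 2)) (r * exp (r ^ 2 / 2)) r :=
    ((hasDerivAt_pow 2 r).div_const 2).exp.congr_deriv (by ring)
  rw [intervalIntegral.integral_eq_sub_of_hasDerivAt (fun r _ => hderiv r)
    ((by fun_prop : Continuous fun r : ℝ => r * exp (r ^ 2 / 2)).intervalIntegrable _ _)]
  simp

noncomputable def expSoftThresholdSq (σ μ x : ℝ) : ℝ :=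
  exp (max (x - μ) 0 ^ 2 / (2 * σ ^ 2)) - 1

lemma expSoftThresholdSq_nonneg (σ μ x : ℝ) : 0 ≤ expSoftThresholdSq σ μ x := by
  rw [expSoftThresholdSq, sub_nonneg, one_le_exp_iff]; positivity

lemma expSoftThresholdSq_abs_le (σ μ x : ℝ) :
    expSoftThresholdSq σ μ |x| ≤
      expSoftThresholdSq σ μ x + expSoftThresholdSq σ μ (-x) := by
  rcases abs_cases x with ⟨h, -⟩ | ⟨h, -⟩ <;> rw [h]
  · linarith [expSoftThresholdSq_nonneg σ μ (-x)]
  · linarith [expSoftThresholdSq_nonneg σ μ x]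

lemma measurable_expSoftThresholdSq (σ μ : ℝ) : Measurable (expSoftThresholdSq σ μ) := by
  unfold expSoftThresholdSq; fun_prop

lemma exp_sum_div_card_le {ι : Type*} (J : Finset ι) (hJ : J.Nonempty) (v : ι → ℝ) :
    exp ((∑ j ∈ J, v j) / J.card) ≤ 1 + (∑ j ∈ J, (exp (v j) - 1)) / J.card := by
  have hcard : (0 : ℝ) < J.card := by exact_mod_cast hJ.card_pos
  have := convexOn_exp.map_sum_le (t := J) (w := fun _ => (J.card : ℝ)⁻¹) (p := v)
    (fun _ _ => by positivity) (by simp [hcard.ne']) (fun _ _ => mem_univ _)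
  simp only [smul_eq_mul, ← Finset.mul_sum] at this
  rw [Finset.sum_sub_distrib]
  simp only [Finset.sum_const, nsmul_eq_mul, mul_one]
  field_simp at this ⊢
  linarith

lemma exp_soft_threshold_top_sum_le {p : ℕ} (J : Finset (Fin p)) (hJ : J.Nonempty) (σ μ : ℝ)
    (x y : Fin p → ℝ) (e : Equiv.Perm (Fin p)) (hy : ∀ j, y j = |x (e j)|) :
    exp (1 / (2 * J.card * σ ^ 2) * ∑ j ∈ J, max (y j - μ) 0 ^ 2) ≤
      1 + 1 / J.card *
        ∑ i, (expSoftThresholdSq σ μ (x i) + expSoftThresholdSq σ μ (-x i)) := by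
  set F := fun i => expSoftThresholdSq σ μ (x i) + expSoftThresholdSq σ μ (-x i)
  have hsum : ∑ j ∈ J, expSoftThresholdSq σ μ (y j) ≤ ∑ i, F i :=
    calc ∑ j ∈ J, expSoftThresholdSq σ μ (y j)
        ≤ ∑ j ∈ J, F (e j) :=
          Finset.sum_le_sum fun j _ => hy j ▸ expSoftThresholdSq_abs_le σ μ _
      _ = ∑ i ∈ J.map e.toEmbedding, F i := (Finset.sum_map J e.toEmbedding F).symm
      _ ≤ ∑ i, F i := Finset.sum_le_univ_sum_of_nonneg fun i =>
          add_nonneg (expSoftThresholdSq_nonneg ..) (expSoftThresholdSq_nonneg ..)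
  calc exp (1 / (2 * J.card * σ ^ 2) * ∑ j ∈ J, max (y j - μ) 0 ^ 2)
      = exp ((∑ j ∈ J, max (y j - μ) 0 ^ 2 / (2 * σ ^ 2)) / J.card) := by
        rw [← Finset.sum_div]; congr 1; ring
    _ ≤ 1 + (∑ j ∈ J, expSoftThresholdSq σ μ (y j)) / J.card := exp_sum_div_card_le J hJ _
    _ ≤ 1 + 1 / J.card * ∑ i, F i := by
        rw [one_div_mul_eq_div]; gcongr

section OrderStatistics

open Finset

lemma lt_antitone_rearrangement_iff {p : ℕ} {x y : Fin p → ℝ} (e : Equiv.Perm (Fin p))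
    (hy : ∀ j, y j = x (e j)) (hanti : Antitone y) (c : ℝ) (j : Fin p) :
    c < y j ↔ (j : ℕ) + 1 ≤ #{i | c < x i} := by
  rw [← card_equiv e (s := {k | c < y k}) fun k => by simp [hy]]
  constructor
  · intro hj
    calc (j : ℕ) + 1 = #(Iic j) := (Fin.card_Iic j).symm
      _ ≤ #{k | c < y k} := card_le_card fun k hk =>
        mem_filter.2 ⟨mem_univ _, hj.trans_le (hanti (mem_Iic.1 hk))⟩
  · intro hj
    by_contra! hjc
    have : #{k | c < y k} ≤ j :=
      calc #{k | c < y k} ≤ #(Iio j) := card_le_card fun k hk => by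
            rw [Finset.mem_Iio]; by_contra! hjk
            exact (mem_filter.1 hk).2.not_ge ((hanti hjk).trans hjc)
        _ = j := Fin.card_Iio j
    omega

/-- The permutation may depend on `ω` non-measurably, so the order statistics are read off
by counting. -/
lemma measurable_of_antitone_rearrangement {Ω : Type*} [MeasurableSpace Ω] {p : ℕ}
    {x y : Fin p → Ω → ℝ} (hx : ∀ i, Measurable (x i))
    (hy : ∀ ω, ∃ e : Equiv.Perm (Fin p), ∀ j, y j ω = x (e j) ω)
    (hanti : ∀ ω, Antitone fun j => y j ω) (j : Fin p) : Measurable (y j) := by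
  refine measurable_of_Ioi fun c => ?_
  have hcount : Measurable fun ω => #{i | c < x i ω} := by
    simp_rw [card_filter]
    exact Finset.measurable_sum _ fun i _ =>
      Measurable.ite (measurableSet_lt measurable_const (hx i)) measurable_const measurable_const
  have hpre : y j ⁻¹' Ioi c = (fun ω => #{i | c < x i ω}) ⁻¹' Ici ((j : ℕ) + 1) := by
    ext ω
    obtain ⟨e, he⟩ := hy ω
    exact lt_antitone_rearrangement_iff e he (hanti ω) c j
  exact hpre ▸ hcount measurableSet_Ici

end OrderStatistics

section Moments

variable {Ω : Type*} [MeasurableSpace Ω] (P : Measure Ω)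

def IsTailDominatedByNormal (σ : ℝ) (X : Ω → ℝ) : Prop :=
  ∀ t, 0 < t →
    (P {ω | σ * t < X ω}).toReal ≤ ∫ u in Ioi t, exp (-u ^ 2 / 2) / √(2 * π)

lemma lintegral_exp_sq_div_two_sub_one {f : Ω → ℝ} (hf : Measurable f) (hf0 : 0 ≤ f) :
    ∫⁻ ω, ENNReal.ofReal (exp (f ω ^ 2 / 2) - 1) ∂P =
      ∫⁻ r in Ioi 0, P {ω | r < f ω} * ENNReal.ofReal (r * exp (r ^ 2 / 2)) := by
  have hcont : Continuous fun r : ℝ => r * exp (r ^ 2 / 2) := by fun_prop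
  simp_rw [← integral_mul_exp_sq_div_two]
  exact lintegral_comp_eq_lintegral_meas_lt_mul P (ae_of_all _ hf0) hf.aemeasurable
    (fun _ _ => hcont.intervalIntegrable _ _)
    ((ae_restrict_iff' measurableSet_Ioi).2 (ae_of_all _ fun r (hr : 0 < r) => by positivity))

lemma measure_lt_soft_threshold_le
    [IsFiniteMeasure P] {X : Ω → ℝ} {σ μ : ℝ} (hσ : 0 < σ) (hμ : 0 < μ)
    (htail : IsTailDominatedByNormal P σ X)
    {r : ℝ} (hr : 0 < r) : P {ω | r < max (X ω - μ) 0 / σ} ≤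
      ENNReal.ofReal (exp (-(μ / σ + r) ^ 2 / 2) / √(2 * π) / (μ / σ)) := by
  have hlevel : {ω | r < max (X ω - μ) 0 / σ} = {ω | σ * (μ / σ + r) < X ω} := by
    ext ω
    simp only [mem_ofPred_eq, lt_div_iff₀ hσ, lt_max_iff, mul_add, mul_div_cancel₀ _ hσ.ne']
    constructor
    · rintro (h | h) <;> nlinarith
    · intro h; left; linarith
  rw [hlevel, ← ENNReal.ofReal_toReal (measure_ne_top P _)]
  exact ENNReal.ofReal_le_ofReal ((htail _ (by positivity)).trans
    (gaussian_tail_le (div_pos hμ hσ) (by linarith)))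

lemma lintegral_expSoftThresholdSq_le
    [IsFiniteMeasure P] {X : Ω → ℝ} (hX : Measurable X) {σ μ : ℝ}
    (hσ : 0 < σ) (hμ : 0 < μ)
    (htail : IsTailDominatedByNormal P σ X) :
    ∫⁻ ω, ENNReal.ofReal (expSoftThresholdSq σ μ (X ω)) ∂P ≤
      ENNReal.ofReal (exp (-(μ / σ) ^ 2 / 2) / √(2 * π) / (μ / σ) ^ 3) := by
  set m := μ / σ
  have hm : 0 < m := div_pos hμ hσ
  have hrescale (ω : Ω) : expSoftThresholdSq σ μ (X ω) =
      exp ((max (X ω - μ) 0 / σ) ^ 2 / 2) - 1 := by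
    rw [expSoftThresholdSq, div_pow]; field_simp
  simp_rw [hrescale]
  rw [lintegral_exp_sq_div_two_sub_one P (by fun_prop) (fun ω => by positivity)]
  calc ∫⁻ r in Ioi 0, P {ω | r < max (X ω - μ) 0 / σ} * ENNReal.ofReal (r * exp (r ^ 2 / 2))
      ≤ ∫⁻ r in Ioi 0,
          ENNReal.ofReal (exp (-m ^ 2 / 2) / √(2 * π) / m * (r * exp (-(m * r)))) := by
        refine setLIntegral_mono' measurableSet_Ioi fun r (hr : 0 < r) => ?_
        rw [← mul_exp_sq_div_two_mul_gaussian,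
          ENNReal.ofReal_mul (by positivity : 0 ≤ r * exp (r ^ 2 / 2)), mul_comm]
        exact mul_le_mul_right (measure_lt_soft_threshold_le P hσ hμ htail hr) _
    _ = ENNReal.ofReal (exp (-m ^ 2 / 2) / √(2 * π) / m ^ 3) := by
        rw [← ofReal_integral_eq_lintegral_ofReal
          ((integrableOn_Ioi_zero_mul_exp_neg_mul hm).const_mul _)
          ((ae_restrict_iff' measurableSet_Ioi).2 (ae_of_all _ fun r (hr : 0 < r) => by
            positivity)), integral_const_mul, integral_Ioi_zero_mul_exp_neg_mul hm]
        congr 1; field_simp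

lemma integrable_expSoftThresholdSq
    [IsFiniteMeasure P] {X : Ω → ℝ} (hX : Measurable X) {σ μ : ℝ}
    (hσ : 0 < σ) (hμ : 0 < μ)
    (htail : IsTailDominatedByNormal P σ X) :
    Integrable (fun ω => expSoftThresholdSq σ μ (X ω)) P :=
  ⟨((measurable_expSoftThresholdSq σ μ).comp hX).aestronglyMeasurable,
    (hasFiniteIntegral_iff_ofReal (ae_of_all _ fun _ => expSoftThresholdSq_nonneg ..)).2
      ((lintegral_expSoftThresholdSq_le P hX hσ hμ htail).trans_lt ENNReal.ofReal_lt_top)⟩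

lemma integral_expSoftThresholdSq_le
    [IsFiniteMeasure P] {X : Ω → ℝ} (hX : Measurable X) {σ μ : ℝ}
    (hσ : 0 < σ) (hμ : 0 < μ)
    (htail : IsTailDominatedByNormal P σ X) :
    ∫ ω, expSoftThresholdSq σ μ (X ω) ∂P ≤
      exp (-(μ / σ) ^ 2 / 2) / √(2 * π) / (μ / σ) ^ 3 := by
  rw [integral_eq_lintegral_of_nonneg_ae (ae_of_all _ fun _ => expSoftThresholdSq_nonneg ..)
    ((measurable_expSoftThresholdSq σ μ).comp hX).aestronglyMeasurable]
  exact ENNReal.toReal_le_of_le_ofReal (by positivity)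
    (lintegral_expSoftThresholdSq_le P hX hσ hμ htail)

lemma integrable_sum_expSoftThresholdSq_and_integral_le [IsFiniteMeasure P] {p : ℕ}
    {g : Fin p → Ω → ℝ} (hmeas : ∀ j, Measurable (g j)) {σ μ : ℝ}
    (hσ : 0 < σ) (hμ : 0 < μ)
    (htail : ∀ j : Fin p, ∀ a ∈ ({-1, 1} : Set ℝ), ∀ t : ℝ, 0 < t →
      (P {ω | σ * t < a * g j ω}).toReal ≤ ∫ u in Ioi t, exp (-u ^ 2 / 2) / √(2 * π)) :
    Integrable (fun ω => ∑ j, (expSoftThresholdSq σ μ (g j ω) +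
        expSoftThresholdSq σ μ (-g j ω))) P ∧
      ∫ ω, ∑ j, (expSoftThresholdSq σ μ (g j ω) + expSoftThresholdSq σ μ (-g j ω)) ∂P ≤
        2 * p * (exp (-(μ / σ) ^ 2 / 2) / √(2 * π) / (μ / σ) ^ 3) := by
  have hpos (j : Fin p) : IsTailDominatedByNormal P σ (g j) := by
    simpa only [IsTailDominatedByNormal, one_mul] using htail j 1 (by simp)
  have hneg (j : Fin p) : IsTailDominatedByNormal P σ (fun ω => -g j ω) := by
    simpa only [IsTailDominatedByNormal, neg_one_mul] using htail j (-1) (by simp)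
  have hint_pos (j : Fin p) := integrable_expSoftThresholdSq P (hmeas j) hσ hμ (hpos j)
  have hint_neg (j : Fin p) :=
    integrable_expSoftThresholdSq P (X := fun ω => -g j ω) (hmeas j).neg hσ hμ (hneg j)
  have hint (j : Fin p) : Integrable
      (fun ω => expSoftThresholdSq σ μ (g j ω) + expSoftThresholdSq σ μ (-g j ω)) P :=
    (hint_pos j).add (hint_neg j)
  refine ⟨integrable_finsetSum _ fun j _ => hint j, ?_⟩
  rw [integral_finsetSum _ fun j _ => hint j]
  calc ∑ j, ∫ ω, (expSoftThresholdSq σ μ (g j ω) + expSoftThresholdSq σ μ (-g j ω)) ∂P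
      ≤ ∑ _j : Fin p, 2 * (exp (-(μ / σ) ^ 2 / 2) / √(2 * π) / (μ / σ) ^ 3) := by
        refine Finset.sum_le_sum fun j _ => ?_
        rw [integral_add (hint_pos j) (hint_neg j)]
        linarith [integral_expSoftThresholdSq_le P (hmeas j) hσ hμ (hpos j),
          integral_expSoftThresholdSq_le P (X := fun ω => -g j ω) (hmeas j).neg hσ hμ
            (hneg j)]
    _ = 2 * p * (exp (-(μ / σ) ^ 2 / 2) / √(2 * π) / (μ / σ) ^ 3) := by simp; ring

lemma integral_le_log_integral_exp_le_log_one_add_le [IsProbabilityMeasure P] {Z G : Ω → ℝ}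
    (hZ : AEStronglyMeasurable Z P) (hZ0 : 0 ≤ Z) (hG : Integrable G P)
    (hdom : ∀ ω, exp (Z ω) ≤ G ω) {B : ℝ} (hB : ∫ ω, G ω ∂P ≤ 1 + B) :
    ∫ ω, Z ω ∂P ≤ log (∫ ω, exp (Z ω) ∂P) ∧
      log (∫ ω, exp (Z ω) ∂P) ≤ log (1 + B) ∧ log (1 + B) ≤ B := by
  have hexp : Integrable (fun ω => exp (Z ω)) P :=
    hG.mono' (continuous_exp.comp_aestronglyMeasurable hZ)
      (ae_of_all _ fun ω => by rw [norm_of_nonneg (exp_pos _).le]; exact hdom ω)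
  have hZint : Integrable Z P :=
    hexp.mono' hZ (ae_of_all _ fun ω => by
      rw [norm_of_nonneg (hZ0 ω)]; linarith [add_one_le_exp (Z ω)])
  have hpos : 0 < ∫ ω, exp (Z ω) ∂P := integral_exp_pos hexp
  have hle : ∫ ω, exp (Z ω) ∂P ≤ 1 + B := (integral_mono hexp hG hdom).trans hB
  refine ⟨(le_log_iff_exp_le hpos).2 ?_, log_le_log hpos hle,
    by linarith [log_le_sub_one_of_pos (hpos.trans_le hle)]⟩
  exact convexOn_exp.map_integral_le continuousOn_exp isClosed_univ
    (ae_of_all _ fun _ => mem_univ _) hZint hexp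

end Moments

/-- Order-statistic moment bound. If each `±g_j/σ` is stochastically
dominated by a standard normal, `g↓` is a non-increasing rearrangement of `(|g_j|)`,
and `Z² = (1/(2dσ²)) Σ_{j<d} (g_j↓ - μ)₊²`, then
`E[Z²] ≤ log E[e^{Z²}] ≤ log(1 + (2p/d) φ(μ/σ)/(μ/σ)³) ≤ (2p/d) φ(μ/σ)/(μ/σ)³`. -/
theorem order_statistics_soft_threshold_bound
    {Ω : Type*} [MeasurableSpace Ω] (μm : Measure Ω) [IsProbabilityMeasure μm]
    {p d : ℕ} (hd : 1 ≤ d) (hdp : d ≤ p)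
    (σ : ℝ) (hσ : 0 < σ) (μ : ℝ) (hμ : 0 < μ)
    (g : Fin p → Ω → ℝ) (hmeas : ∀ j, Measurable (g j))
    (hdom : ∀ j : Fin p, ∀ a ∈ ({-1, 1} : Set ℝ), ∀ t : ℝ, 0 < t →
      (μm {ω | σ * t < a * g j ω}).toReal ≤
        ∫ u in Set.Ioi t, Real.exp (-u ^ 2 / 2) / Real.sqrt (2 * Real.pi))
    (gs : Fin p → Ω → ℝ)
    (hrearr : ∀ ω, ∃ e : Equiv.Perm (Fin p), ∀ j, gs j ω = |g (e j) ω|)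
    (hmono : ∀ ω, Antitone fun j => gs j ω)
    (Z2 : Ω → ℝ)
    (hZ2 : ∀ ω, Z2 ω = (1 / (2 * d * σ ^ 2)) *
      ∑ j ∈ Finset.univ.filter (fun j : Fin p => (j : ℕ) < d),
        (max (gs j ω - μ) 0) ^ 2) :
    (∫ ω, Z2 ω ∂μm) ≤ Real.log (∫ ω, Real.exp (Z2 ω) ∂μm) ∧
    Real.log (∫ ω, Real.exp (Z2 ω) ∂μm) ≤
      Real.log (1 + (2 * p / d) *
        (Real.exp (-(μ / σ) ^ 2 / 2) / Real.sqrt (2 * Real.pi)) / (μ / σ) ^ 3) ∧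
    Real.log (1 + (2 * p / d) *
        (Real.exp (-(μ / σ) ^ 2 / 2) / Real.sqrt (2 * Real.pi)) / (μ / σ) ^ 3) ≤
      (2 * p / d) *
        (Real.exp (-(μ / σ) ^ 2 / 2) / Real.sqrt (2 * Real.pi)) / (μ / σ) ^ 3 := by
  set J : Finset (Fin p) := Finset.univ.filter fun j : Fin p => (j : ℕ) < d
  have hJ : J.card = d := by simp [J, Fin.card_filter_val_lt, hdp]
  have hgs := measurable_of_antitone_rearrangement (fun j => (hmeas j).abs) hrearr hmono
  have hZmeas : Measurable Z2 := by
    rw [funext hZ2]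
    exact measurable_const.mul (Finset.measurable_sum _ fun j _ => by fun_prop)
  have hZ0 : 0 ≤ Z2 := fun ω => by rw [hZ2]; positivity
  obtain ⟨hS, hSle⟩ := integrable_sum_expSoftThresholdSq_and_integral_le μm hmeas hσ hμ hdom
  refine integral_le_log_integral_exp_le_log_one_add_le μm hZmeas.aestronglyMeasurable hZ0
    (G := fun ω => 1 + 1 / d * ∑ j, (expSoftThresholdSq σ μ (g j ω) +
      expSoftThresholdSq σ μ (-g j ω)))
    ((integrable_const 1).add (hS.const_mul _)) (fun ω => ?_) ?_
  · obtain ⟨e, he⟩ := hrearr ω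
    rw [hZ2, ← hJ]
    exact exp_soft_threshold_top_sum_le J (Finset.card_pos.1 (hJ ▸ hd)) σ μ _ _ e he
  · rw [integral_add (integrable_const 1) (hS.const_mul _), integral_const_mul]
    simp only [integral_const, probReal_univ, smul_eq_mul, one_mul]
    calc 1 + 1 / (d : ℝ) * _ ≤ 1 + 1 / d * (2 * p * _) := by gcongr
      _ = _ := by ring
end

section
/- Let g₁,...,g_p be random variables satisfying the subgaussian domination P(a g_j > σt) ≤ Q(t) for a = ±1 and all t > 0. Then for any μ > 0, E[Σ_{j=1}^p (|g_j| - μ)₊²] ≤ 4p σ² φ(μ/σ)/(μ/σ)³. -/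
/-!
If `(|X| - μ)₊ > t > 0` then `|X| > σ s` with `s = μ/σ + t/σ`. By the domination and the Mills
ratio bound `Q(s) ≤ φ(s)/s`, this has probability at most `2 φ(s)/s`, and since
`φ(x + y) ≤ φ(x) e^{-xy}` that is at most `2 φ(μ/σ)/(μ/σ) · e^{-μt/σ²}`. Integrating this
exponential tail against `2t dt` (layer cake) bounds each `E[(|g_j| - μ)₊²]` by
`4 σ² φ(μ/σ)/(μ/σ)³`.
-/

open MeasureTheory Set Filter Topology Real

noncomputable def stdGaussianPDF (x : ℝ) : ℝ := exp (-x ^ 2 / 2) / √(2 * π)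

lemma stdGaussianPDF_pos (x : ℝ) : 0 < stdGaussianPDF x := by
  unfold stdGaussianPDF; positivity

lemma stdGaussianPDF_add_le (x y : ℝ) :
    stdGaussianPDF (x + y) ≤ stdGaussianPDF x * exp (-(x * y)) := by
  unfold stdGaussianPDF
  rw [div_mul_eq_mul_div, ← exp_add]
  gcongr
  nlinarith [sq_nonneg y]

lemma hasDerivAt_stdGaussianPDF (x : ℝ) :
    HasDerivAt stdGaussianPDF (-(x * stdGaussianPDF x)) x := by
  have h : HasDerivAt (fun u : ℝ => -u ^ 2 / 2) (-x) x := by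
    refine (((hasDerivAt_pow 2 x).neg).div_const 2).congr_deriv ?_
    push_cast; ring
  refine (h.exp.div_const √(2 * π)).congr_deriv ?_
  rw [stdGaussianPDF]; ring

lemma tendsto_stdGaussianPDF_atTop : Tendsto stdGaussianPDF atTop (𝓝 0) := by
  have h : Tendsto (fun u : ℝ => -u ^ 2 / 2) atTop atBot :=
    (tendsto_neg_atTop_atBot.comp (tendsto_pow_atTop two_ne_zero)).atBot_div_const two_pos
  have := (tendsto_exp_atBot.comp h).div_const √(2 * π)
  rwa [zero_div] at this

lemma integrableOn_and_integral_Ioi_mul_stdGaussianPDF {x : ℝ} (hx : 0 ≤ x) :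
    IntegrableOn (fun u => u * stdGaussianPDF u) (Ioi x) ∧
      ∫ u in Ioi x, u * stdGaussianPDF u = stdGaussianPDF x := by
  have hderiv (u : ℝ) : HasDerivAt (fun u => -stdGaussianPDF u) (u * stdGaussianPDF u) u := by
    simpa only [neg_neg] using (hasDerivAt_stdGaussianPDF u).fun_neg
  have hcont := (hderiv x).continuousAt.continuousWithinAt (s := Ici x)
  have hnonneg (u : ℝ) (hu : u ∈ Ioi x) : 0 ≤ u * stdGaussianPDF u :=
    mul_nonneg (hx.trans hu.out.le) (stdGaussianPDF_pos u).le
  have hlim : Tendsto (fun u => -stdGaussianPDF u) atTop (𝓝 (-0)) :=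
    tendsto_stdGaussianPDF_atTop.neg
  rw [neg_zero] at hlim
  refine ⟨integrableOn_Ioi_deriv_of_nonneg hcont (fun u _ => hderiv u) hnonneg hlim, ?_⟩
  rw [integral_Ioi_of_hasDerivAt_of_nonneg hcont (fun u _ => hderiv u) hnonneg hlim]
  ring

lemma integral_Ioi_stdGaussianPDF_le {x : ℝ} (hx : 0 < x) :
    ∫ u in Ioi x, stdGaussianPDF u ≤ stdGaussianPDF x / x := by
  obtain ⟨hint, hval⟩ := integrableOn_and_integral_Ioi_mul_stdGaussianPDF hx.le
  calc ∫ u in Ioi x, stdGaussianPDF u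
      ≤ ∫ u in Ioi x, u * stdGaussianPDF u / x := by
        refine integral_mono_of_nonneg (Eventually.of_forall fun u => (stdGaussianPDF_pos u).le)
          (hint.div_const x) (ae_restrict_of_forall_mem measurableSet_Ioi fun u hu => ?_)
        rw [le_div_iff₀ hx, mul_comm]
        exact mul_le_mul_of_nonneg_right hu.out.le (stdGaussianPDF_pos u).le
    _ = stdGaussianPDF x / x := by rw [integral_div, hval]

lemma integrableOn_and_integral_Ioi_mul_exp_neg_mul {c : ℝ} (hc : 0 < c) :
    IntegrableOn (fun t => t * exp (-(c * t))) (Ioi 0) ∧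
      ∫ t in Ioi (0 : ℝ), t * exp (-(c * t)) = (c ^ 2)⁻¹ := by
  have h := integrableOn_rpow_mul_exp_neg_mul_rpow (s := 1) (p := 1) (by norm_num) one_pos hc
  have hval := integral_rpow_mul_exp_neg_mul_Ioi (a := 2) two_pos hc
  norm_num [Gamma_two] at h hval
  exact ⟨h, hval⟩

def IsGaussianTailDominated {Ω : Type*} [MeasurableSpace Ω] (P : Measure Ω) (σ : ℝ)
    (X : Ω → ℝ) : Prop :=
  ∀ a ∈ ({-1, 1} : Set ℝ), ∀ t : ℝ, 0 < t →
    (P {ω | σ * t < a * X ω}).toReal ≤ ∫ u in Ioi t, stdGaussianPDF u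

section Moments

variable {Ω : Type*} [MeasurableSpace Ω] {P : Measure Ω}

lemma lintegral_sq_le_of_measure_lt_le_exp {f : Ω → ℝ} (hf : 0 ≤ᵐ[P] f)
    (hfm : AEMeasurable f P) {K c : ℝ} (hK : 0 ≤ K) (hc : 0 < c)
    (htail : ∀ t, 0 < t → P {ω | t < f ω} ≤ ENNReal.ofReal (K * exp (-(c * t)))) :
    ∫⁻ ω, ENNReal.ofReal (f ω ^ 2) ∂P ≤ ENNReal.ofReal (2 * K / c ^ 2) := by
  obtain ⟨hint, hval⟩ := integrableOn_and_integral_Ioi_mul_exp_neg_mul hc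
  have hlayer := lintegral_rpow_eq_lintegral_meas_lt_mul P hf hfm two_pos
  norm_num only [rpow_two, rpow_one] at hlayer
  have hbound : ∀ t ∈ Ioi (0 : ℝ), P {ω | t < f ω} * ENNReal.ofReal t ≤
      ENNReal.ofReal (K * (t * exp (-(c * t)))) := fun t ht => by
    rw [← mul_assoc, mul_right_comm, ENNReal.ofReal_mul (by positivity)]
    exact mul_le_mul_left (htail t ht) _
  have hnonneg : 0 ≤ᵐ[volume.restrict (Ioi 0)] fun t => K * (t * exp (-(c * t))) :=
    ae_restrict_of_forall_mem measurableSet_Ioi fun t ht => by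
      have : 0 < t := ht
      positivity
  calc ∫⁻ ω, ENNReal.ofReal (f ω ^ 2) ∂P
      ≤ ENNReal.ofReal 2 * ∫⁻ t in Ioi 0, ENNReal.ofReal (K * (t * exp (-(c * t)))) := by
        rw [hlayer]
        gcongr ENNReal.ofReal 2 * ?_
        exact setLIntegral_mono' measurableSet_Ioi hbound
    _ = ENNReal.ofReal (2 * K / c ^ 2) := by
        rw [← ofReal_integral_eq_lintegral_ofReal (hint.const_mul K) hnonneg, integral_const_mul,
          hval, ← ENNReal.ofReal_mul zero_le_two]
        ring_nf

variable [IsFiniteMeasure P] {σ μ : ℝ} {X : Ω → ℝ}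

lemma IsGaussianTailDominated.measure_lt_abs_le (hX : IsGaussianTailDominated P σ X) {s : ℝ}
    (hs : 0 < s) :
    P {ω | σ * s < |X ω|} ≤ 2 * ENNReal.ofReal (stdGaussianPDF s / s) := by
  have hside (a : ℝ) (ha : a ∈ ({-1, 1} : Set ℝ)) :
      P {ω | σ * s < a * X ω} ≤ ENNReal.ofReal (stdGaussianPDF s / s) :=
    (ENNReal.le_ofReal_iff_toReal_le (measure_ne_top P _)
      (div_pos (stdGaussianPDF_pos s) hs).le).mpr
      ((hX a ha s hs).trans (integral_Ioi_stdGaussianPDF_le hs))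
  have hsplit : {ω | σ * s < |X ω|} ⊆ {ω | σ * s < 1 * X ω} ∪ {ω | σ * s < -1 * X ω} := by
    intro ω hω
    simpa only [mem_union, mem_ofPred_eq, one_mul, neg_one_mul, lt_abs] using hω
  calc P {ω | σ * s < |X ω|}
      ≤ P {ω | σ * s < 1 * X ω} + P {ω | σ * s < -1 * X ω} :=
        (measure_mono hsplit).trans (measure_union_le _ _)
    _ ≤ ENNReal.ofReal (stdGaussianPDF s / s) + ENNReal.ofReal (stdGaussianPDF s / s) :=
        add_le_add (hside 1 (by simp)) (hside (-1) (by simp))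
    _ = 2 * ENNReal.ofReal (stdGaussianPDF s / s) := (two_mul _).symm

lemma IsGaussianTailDominated.measure_lt_max_abs_sub_le (hX : IsGaussianTailDominated P σ X)
    (hσ : 0 < σ) (hμ : 0 < μ) {t : ℝ} (ht : 0 < t) :
    P {ω | t < max (|X ω| - μ) 0} ≤
      ENNReal.ofReal (2 * (stdGaussianPDF (μ / σ) / (μ / σ)) * exp (-(μ / σ ^ 2 * t))) := by
  set m := μ / σ
  have hm : 0 < m := div_pos hμ hσ
  have hs : 0 < m + t / σ := by positivity
  have hsub : {ω | t < max (|X ω| - μ) 0} ⊆ {ω | σ * (m + t / σ) < |X ω|} := by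
    intro ω hω
    have hσs : σ * (m + t / σ) = μ + t := by simp only [m]; field_simp
    simp only [mem_ofPred_eq, lt_max_iff, hσs] at hω ⊢
    rcases hω with h | h <;> linarith
  have hdecay : stdGaussianPDF (m + t / σ) / (m + t / σ) ≤
      stdGaussianPDF m / m * exp (-(μ / σ ^ 2 * t)) := by
    have hexp : m * (t / σ) = μ / σ ^ 2 * t := by simp only [m]; field_simp
    calc stdGaussianPDF (m + t / σ) / (m + t / σ)
        ≤ stdGaussianPDF m * exp (-(m * (t / σ))) / m :=
          div_le_div₀ (mul_nonneg (stdGaussianPDF_pos m).le (exp_pos _).le)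
            (stdGaussianPDF_add_le m (t / σ)) hm (le_add_of_nonneg_right (div_pos ht hσ).le)
      _ = stdGaussianPDF m / m * exp (-(μ / σ ^ 2 * t)) := by rw [hexp]; ring
  calc P {ω | t < max (|X ω| - μ) 0}
      ≤ 2 * ENNReal.ofReal (stdGaussianPDF (m + t / σ) / (m + t / σ)) :=
        (measure_mono hsub).trans (hX.measure_lt_abs_le hs)
    _ ≤ 2 * ENNReal.ofReal (stdGaussianPDF m / m * exp (-(μ / σ ^ 2 * t))) := by
        gcongr
    _ = ENNReal.ofReal (2 * (stdGaussianPDF m / m) * exp (-(μ / σ ^ 2 * t))) := by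
        rw [mul_assoc, ENNReal.ofReal_mul zero_le_two, ENNReal.ofReal_ofNat]

lemma IsGaussianTailDominated.lintegral_sq_max_abs_sub_le (hX : IsGaussianTailDominated P σ X)
    (hXm : AEMeasurable X P) (hσ : 0 < σ) (hμ : 0 < μ) :
    ∫⁻ ω, ENNReal.ofReal (max (|X ω| - μ) 0 ^ 2) ∂P ≤
      ENNReal.ofReal (4 * σ ^ 2 * stdGaussianPDF (μ / σ) / (μ / σ) ^ 3) := by
  have hm : 0 < μ / σ := div_pos hμ hσ
  have hK : 0 ≤ 2 * (stdGaussianPDF (μ / σ) / (μ / σ)) :=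
    mul_nonneg zero_le_two (div_pos (stdGaussianPDF_pos _) hm).le
  convert lintegral_sq_le_of_measure_lt_le_exp (f := fun ω => max (|X ω| - μ) 0) (c := μ / σ ^ 2)
    (Eventually.of_forall fun ω => le_max_right _ _)
    ((hXm.abs.sub_const μ).max aemeasurable_const) hK (by positivity)
    (fun t ht => hX.measure_lt_max_abs_sub_le hσ hμ ht) using 2
  field_simp
  ring

lemma IsGaussianTailDominated.integrable_sq_max_abs_sub (hX : IsGaussianTailDominated P σ X)
    (hXm : AEMeasurable X P) (hσ : 0 < σ) (hμ : 0 < μ) :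
    Integrable (fun ω => max (|X ω| - μ) 0 ^ 2) P :=
  (lintegral_ofReal_ne_top_iff_integrable
    (((hXm.abs.sub_const μ).max aemeasurable_const).pow_const 2).aestronglyMeasurable
    (Eventually.of_forall fun _ => sq_nonneg _)).mp
    (ne_top_of_le_ne_top ENNReal.ofReal_ne_top (hX.lintegral_sq_max_abs_sub_le hXm hσ hμ))

lemma IsGaussianTailDominated.integral_sq_max_abs_sub_le (hX : IsGaussianTailDominated P σ X)
    (hXm : AEMeasurable X P) (hσ : 0 < σ) (hμ : 0 < μ) :
    ∫ ω, max (|X ω| - μ) 0 ^ 2 ∂P ≤ 4 * σ ^ 2 * stdGaussianPDF (μ / σ) / (μ / σ) ^ 3 := by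
  rw [integral_eq_lintegral_of_nonneg_ae (Eventually.of_forall fun _ => sq_nonneg _)
    (hX.integrable_sq_max_abs_sub hXm hσ hμ).aestronglyMeasurable]
  exact ENNReal.toReal_le_of_le_ofReal
    (div_nonneg (mul_nonneg (by positivity) (stdGaussianPDF_pos _).le) (by positivity))
    (hX.lintegral_sq_max_abs_sub_le hXm hσ hμ)

end Moments

/-- If each `±g_j/σ` is stochastically dominated by a standard normal,
then for any `μ > 0`, `E[Σ_j (|g_j| - μ)₊²] ≤ 4 p σ² φ(μ/σ)/(μ/σ)³`. -/
theorem soft_threshold_sum_moment_bound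
    {Ω : Type*} [MeasurableSpace Ω] (μm : Measure Ω) [IsProbabilityMeasure μm]
    {p : ℕ} (σ : ℝ) (hσ : 0 < σ) (μ : ℝ) (hμ : 0 < μ)
    (g : Fin p → Ω → ℝ) (hmeas : ∀ j, Measurable (g j))
    (hdom : ∀ j : Fin p, ∀ a ∈ ({-1, 1} : Set ℝ), ∀ t : ℝ, 0 < t →
      (μm {ω | σ * t < a * g j ω}).toReal ≤
        ∫ u in Set.Ioi t, Real.exp (-u ^ 2 / 2) / Real.sqrt (2 * Real.pi)) :
    (∫ ω, ∑ j, (max (|g j ω| - μ) 0) ^ 2 ∂μm) ≤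
      4 * p * σ ^ 2 *
        (Real.exp (-(μ / σ) ^ 2 / 2) / Real.sqrt (2 * Real.pi)) / (μ / σ) ^ 3 := by
  have hX : ∀ j, IsGaussianTailDominated μm σ (g j) := hdom
  calc ∫ ω, ∑ j, max (|g j ω| - μ) 0 ^ 2 ∂μm
      = ∑ j, ∫ ω, max (|g j ω| - μ) 0 ^ 2 ∂μm := integral_finsetSum _ fun j _ =>
        (hX j).integrable_sq_max_abs_sub (hmeas j).aemeasurable hσ hμ
    _ ≤ ∑ _j : Fin p, 4 * σ ^ 2 * stdGaussianPDF (μ / σ) / (μ / σ) ^ 3 :=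
        Finset.sum_le_sum fun j _ =>
          (hX j).integral_sq_max_abs_sub_le (hmeas j).aemeasurable hσ hμ
    _ = _ := by
        rw [Finset.sum_const, Finset.card_univ, Fintype.card_fin, nsmul_eq_mul, stdGaussianPDF]
        ring
end

section
/- For any positive integers d, p with d ≤ p/5 and any matrix X ∈ ℝ^{n×p}, there exists a subset Ω of {w ∈ {-1,0,1}^p : ‖w‖₀ = d} such that (i) log|Ω| ≥ (d/2)log(p/(5d)); (ii) for any two distinct w, w' ∈ Ω, ‖w - w'‖² > d (counting coordinates where the supports/signs differ, i.e., the Hamming-type distance of the supports exceeds d); (iii) every w ∈ Ω satisfies (1/n)‖Xw‖² ≤ d · max_{j=1,...,p} ‖Xe_j‖²/n. -/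
/-! Let `m = p / d` and take a code `C ⊆ Fin d → Fin m` that is maximal among those of Hamming
distance `> d / 2`. Maximality makes the balls of radius `d / 2` around `C` cover the cube, and
such a ball has at most `2 ^ d * m ^ (d / 2)` points, so `|C| ^ 2 ≥ (m / 4) ^ d ≥ (p / (5 d)) ^ d`.
The codeword `c` becomes the support `{k * m + c k | k < d}`: supports have `d` elements, and
those of distinct codewords differ in `2 * hammingDist > d` coordinates. On each support the
signs are chosen greedily, one column of `X` at a time, which gives
`‖X w‖² ≤ ∑_{j ∈ supp w} ‖X e_j‖²` without averaging over random signs. -/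

open Finset Fintype Matrix
open scoped symmDiff

theorem exists_abs_eq_one_norm_sum_smul_sq_le {ι E : Type*} [NormedAddCommGroup E]
    [InnerProductSpace ℝ E] (v : ι → E) (s : Finset ι) :
    ∃ ε : ι → ℝ, (∀ j, |ε j| = 1) ∧ ‖∑ j ∈ s, ε j • v j‖ ^ 2 ≤ ∑ j ∈ s, ‖v j‖ ^ 2 := by
  classical
  induction s using Finset.induction with
  | empty => exact ⟨fun _ => 1, fun _ => abs_one, by simp⟩
  | @insert a s ha ih =>
    obtain ⟨ε, hε, hle⟩ := ih
    set u := ∑ j ∈ s, ε j • v j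
    -- the new sign is chosen against the partial sum, so the cross term is nonpositive
    set t : ℝ := if 0 ≤ inner ℝ (v a) u then -1 else 1
    have ht : |t| = 1 := by unfold t; split_ifs <;> simp
    have hcross : t * inner ℝ (v a) u ≤ 0 := by
      unfold t; split_ifs with h <;> linarith
    refine ⟨Function.update ε a t, fun j => ?_, ?_⟩
    · rcases eq_or_ne j a with rfl | hj
      · simpa using ht
      · simpa [hj] using hε j
    · have hsum : ∑ j ∈ insert a s, Function.update ε a t j • v j = t • v a + u := by
        rw [sum_insert ha, Function.update_self]
        congr 1
        exact sum_congr rfl fun j hj => by rw [Function.update_of_ne (ne_of_mem_of_not_mem hj ha)]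
      rw [hsum, norm_add_sq_real, norm_smul, inner_smul_left, sum_insert ha, Real.norm_eq_abs, ht]
      simp only [conj_trivial, one_mul]
      linarith

theorem Matrix.exists_abs_eq_ite_sum_mulVec_sq_le {m n : Type*} [Fintype m] [Fintype n]
    [DecidableEq n] (X : Matrix m n ℝ) (S : Finset n) :
    ∃ w : n → ℝ, (∀ j, |w j| = if j ∈ S then 1 else 0) ∧
      ∑ i, (X *ᵥ w) i ^ 2 ≤ ∑ j ∈ S, ∑ i, X i j ^ 2 := by
  obtain ⟨ε, hε, hle⟩ :=
    exists_abs_eq_one_norm_sum_smul_sq_le (fun j => WithLp.toLp 2 (Xᵀ j)) S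
  refine ⟨fun j => if j ∈ S then ε j else 0, fun j => by split_ifs <;> simp [*], ?_⟩
  have hmulVec : WithLp.toLp 2 (X *ᵥ fun j => if j ∈ S then ε j else 0) =
      ∑ j ∈ S, ε j • WithLp.toLp 2 (Xᵀ j) := by
    ext i
    simp [Matrix.mulVec, dotProduct, mul_comm, Finset.sum_ite_mem]
  simpa [EuclideanSpace.real_norm_sq_eq, ← hmulVec] using hle

theorem card_filter_hammingDist_le {ι β : Type*} [Fintype ι] [DecidableEq ι] [Fintype β]
    [DecidableEq β] [Nonempty β] (c : ι → β) (r : ℕ) :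
    #{y | hammingDist y c ≤ r} ≤ 2 ^ card ι * card β ^ r := by
  -- `y` is determined by the set `T` where it differs from `c` and by its values on `T`
  have hcover : ({y | hammingDist y c ≤ r} : Finset (ι → β)) ⊆
      (univ.filter fun T : Finset ι => #T ≤ r).biUnion fun T =>
        piFinset fun k => if k ∈ T then univ else {c k} := by
    intro y hy
    simp only [mem_filter, mem_univ, true_and] at hy
    refine mem_biUnion.2 ⟨univ.filter fun k => y k ≠ c k, by simpa [hammingDist] using hy, ?_⟩
    rw [mem_piFinset]
    intro k
    by_cases hk : y k = c k <;> simp [hk]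
  have hpiece : ∀ T ∈ (univ.filter fun T : Finset ι => #T ≤ r),
      #(piFinset fun k => if k ∈ T then univ else {c k}) ≤ card β ^ r := by
    intro T hT
    rw [card_piFinset]
    simp only [apply_ite card, card_univ, card_singleton, Fintype.prod_ite_mem, prod_const]
    exact pow_le_pow_right₀ card_pos (mem_filter.1 hT).2
  calc #{y | hammingDist y c ≤ r}
      ≤ #(univ.filter fun T : Finset ι => #T ≤ r) * card β ^ r :=
        (card_le_card hcover).trans (card_biUnion_le_card_mul _ _ _ hpiece)
    _ ≤ 2 ^ card ι * card β ^ r := by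
        gcongr
        exact (card_filter_le _ _).trans (by simp)

theorem exists_pairwise_not_card_le_card_mul {α : Type*} [Fintype α] [DecidableEq α]
    (R : α → α → Prop) [DecidableRel R] (hsymm : ∀ x y, R x y → R y x) (hR : ∀ x, R x x) (B : ℕ)
    (hB : ∀ x, #{y | R x y} ≤ B) :
    ∃ C : Finset α, (C : Set α).Pairwise (fun x y => ¬ R x y) ∧ card α ≤ #C * B := by
  obtain ⟨C, hC, hmax⟩ := exists_max_image
    (univ.filter fun C : Finset α => (C : Set α).Pairwise fun x y => ¬ R x y) card
    ⟨∅, by simp⟩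
  rw [mem_filter] at hC
  -- a maximal separated set is a covering: otherwise a point could be added to it
  have hcover : ∀ y, ∃ c ∈ C, R c y := by
    by_contra! hfar
    obtain ⟨y, hy⟩ := hfar
    have hyC : y ∉ C := fun h => hy y h (hR y)
    have := hmax (insert y C) <| mem_filter.2 ⟨mem_univ _, by
      rw [coe_insert, Set.pairwise_insert_of_notMem (by simpa using hyC)]
      exact ⟨hC.2, fun c hc => ⟨fun h => hy c hc (hsymm _ _ h), hy c hc⟩⟩⟩
    rw [card_insert_of_notMem hyC] at this
    omega
  refine ⟨C, hC.2, ?_⟩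
  calc card α = #(univ : Finset α) := card_univ.symm
    _ ≤ #(C.biUnion fun c => {y | R c y}) :=
        card_le_card fun y _ => by simpa using hcover y
    _ ≤ #C * B := card_biUnion_le_card_mul _ _ _ fun c _ => hB c

theorem exists_hammingDist_gt_card_le {ι β : Type*} [Fintype ι] [DecidableEq ι] [Fintype β]
    [DecidableEq β] [Nonempty β] (r : ℕ) :
    ∃ C : Finset (ι → β), (∀ c ∈ C, ∀ c' ∈ C, c ≠ c' → r < hammingDist c c') ∧
      card β ^ card ι ≤ #C * (2 ^ card ι * card β ^ r) := by
  obtain ⟨C, hC, hcard⟩ := exists_pairwise_not_card_le_card_mul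
    (fun x y : ι → β => hammingDist x y ≤ r) (fun x y => (hammingDist_comm y x).trans_le)
    (by simp) _
    fun c => by simpa only [hammingDist_comm c] using card_filter_hammingDist_le c r
  exact ⟨C, fun c hc c' hc' hne => not_le.1 (hC hc hc' hne), by simpa using hcard⟩

section Graph

variable {ι β γ : Type*} (e : ι × β ↪ γ)

def graphEmbedding (c : ι → β) : ι ↪ γ :=
  ⟨fun k => e (k, c k), fun _ _ h => congrArg Prod.fst (e.injective h)⟩

@[simp]
theorem graphEmbedding_apply (c : ι → β) (k : ι) : graphEmbedding e c k = e (k, c k) :=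
  rfl

variable [Fintype ι]

def graphFinset (c : ι → β) : Finset γ :=
  univ.map (graphEmbedding e c)

theorem card_graphFinset (c : ι → β) : #(graphFinset e c) = card ι := by
  simp [graphFinset]

theorem apply_mem_graphFinset_iff {c' : ι → β} {k : ι} {b : β} :
    e (k, b) ∈ graphFinset e c' ↔ c' k = b := by
  simp only [graphFinset, mem_map, mem_univ, true_and]
  constructor
  · rintro ⟨k', hk'⟩
    obtain ⟨rfl, h⟩ := Prod.ext_iff.1 (e.injective hk')
    exact h
  · intro h
    exact ⟨k, by simp [h]⟩

variable [DecidableEq β] [DecidableEq γ]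

theorem card_graphFinset_sdiff (c c' : ι → β) :
    #(graphFinset e c \ graphFinset e c') = hammingDist c c' := by
  rw [sdiff_eq_filter, show graphFinset e c = univ.map (graphEmbedding e c) from rfl, filter_map,
    card_map, hammingDist]
  congr 1
  ext k
  simp [apply_mem_graphFinset_iff, eq_comm]

theorem card_graphFinset_symmDiff (c c' : ι → β) :
    #(graphFinset e c ∆ graphFinset e c') = 2 * hammingDist c c' := by
  rw [Finset.symmDiff_def, card_union_of_disjoint disjoint_sdiff_sdiff,
    card_graphFinset_sdiff, card_graphFinset_sdiff, hammingDist_comm c', two_mul]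

end Graph

section AbsIndicator

variable {ι : Type*} [DecidableEq ι] {w w' : ι → ℝ} {S S' : Finset ι}

theorem eq_neg_one_or_eq_zero_or_eq_one_of_abs_eq_ite (hw : ∀ j, |w j| = if j ∈ S then 1 else 0)
    (j : ι) : w j = -1 ∨ w j = 0 ∨ w j = 1 := by
  have := hw j
  split_ifs at this
  · rcases abs_eq zero_le_one |>.1 this with h | h <;> simp [h]
  · simp [abs_eq_zero.1 this]

variable [Fintype ι]

theorem filter_ne_zero_eq_of_abs_eq_ite (hw : ∀ j, |w j| = if j ∈ S then 1 else 0) :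
    univ.filter (fun j => w j ≠ 0) = S := by
  ext j
  rw [mem_filter, ← abs_ne_zero, hw j, and_iff_right (mem_univ j)]
  split_ifs <;> simp [*]

theorem filter_abs_ne_eq_symmDiff_of_abs_eq_ite (hw : ∀ j, |w j| = if j ∈ S then 1 else 0)
    (hw' : ∀ j, |w' j| = if j ∈ S' then 1 else 0) :
    univ.filter (fun j => |w j| ≠ |w' j|) = S ∆ S' := by
  ext j
  by_cases hj : j ∈ S <;> by_cases hj' : j ∈ S' <;> simp [hw, hw', hj, hj', Finset.mem_symmDiff]

end AbsIndicator

theorem pow_le_sq_mul_four_pow {m d r N : ℕ} (hm : 0 < m) (hr : 2 * r ≤ d)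
    (h : m ^ d ≤ N * (2 ^ d * m ^ r)) : m ^ d ≤ N ^ 2 * 4 ^ d := by
  have hsq : m ^ d * m ^ d ≤ N ^ 2 * 4 ^ d * m ^ (2 * r) := by
    calc m ^ d * m ^ d ≤ (N * (2 ^ d * m ^ r)) ^ 2 := by rw [← sq]; gcongr
      _ = N ^ 2 * 4 ^ d * m ^ (2 * r) := by
        rw [show (4 : ℕ) = 2 ^ 2 from rfl, ← pow_mul]; ring
  have : m ^ (2 * r) ≤ m ^ d := Nat.pow_le_pow_right hm hr
  exact Nat.le_of_mul_le_mul_right (hsq.trans (by gcongr)) (by positivity)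

theorem half_mul_log_le_log_of_pow_le_sq {x : ℝ} {d N : ℕ} (hx : 0 < x) (h : x ^ d ≤ (N : ℝ) ^ 2) :
    (d / 2 : ℝ) * Real.log x ≤ Real.log N := by
  have := Real.log_le_log (by positivity) h
  rw [Real.log_pow, Real.log_pow] at this
  push_cast at this
  linarith

theorem cast_div_five_mul_le_cast_div_div_four {p d : ℕ} (hd : 0 < d) (hdp : 5 * d ≤ p) :
    (p : ℝ) / (5 * d) ≤ ((p / d : ℕ) : ℝ) / 4 := by
  have hm : 5 ≤ p / d := (Nat.le_div_iff_mul_le hd).2 (by linarith)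
  -- `4 * p < 4 * d * (p / d + 1) ≤ 5 * d * (p / d)`
  have h : 4 * p ≤ 5 * (d * (p / d)) := by
    have := Nat.lt_mul_div_succ p hd
    nlinarith
  rw [div_le_div_iff₀ (by positivity) (by norm_num)]
  exact_mod_cast (by linarith : p * 4 ≤ p / d * (5 * d))

theorem half_mul_log_div_five_mul_le_log {p d N : ℕ} (hd : 0 < d) (hdp : 5 * d ≤ p)
    (h : (p / d) ^ d ≤ N * (2 ^ d * (p / d) ^ (d / 2))) :
    (d / 2 : ℝ) * Real.log ((p : ℝ) / (5 * d)) ≤ Real.log N := by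
  have hm : 5 ≤ p / d := (Nat.le_div_iff_mul_le hd).2 hdp
  have hp : 0 < p := by omega
  refine half_mul_log_le_log_of_pow_le_sq (by positivity) ?_
  calc ((p : ℝ) / (5 * d)) ^ d ≤ (((p / d : ℕ) : ℝ) / 4) ^ d :=
        pow_le_pow_left₀ (by positivity) (cast_div_five_mul_le_cast_div_div_four hd hdp) d
    _ ≤ (N : ℝ) ^ 2 := by
        rw [div_pow, div_le_iff₀ (by positivity)]
        exact_mod_cast pow_le_sq_mul_four_pow (by omega) (by omega) h

theorem Matrix.one_div_mul_sum_mulVec_sq_le_card_mul_sup' {m ι : Type*} [Fintype m]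
    [Fintype ι] (X : Matrix m ι ℝ) (N : ℕ) {w : ι → ℝ} {S : Finset ι}
    (hXw : ∑ i, (X *ᵥ w) i ^ 2 ≤ ∑ j ∈ S, ∑ i, X i j ^ 2) (hne : (univ : Finset ι).Nonempty) :
    (1 / (N : ℝ)) * ∑ i, (X *ᵥ w) i ^ 2 ≤ #S * univ.sup' hne fun j => (∑ i, X i j ^ 2) / N :=
  calc (1 / (N : ℝ)) * ∑ i, (X *ᵥ w) i ^ 2
      ≤ ∑ j ∈ S, (∑ i, X i j ^ 2) / N := by
        rw [← sum_div, one_div_mul_eq_div]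
        gcongr
    _ ≤ #S • univ.sup' hne fun j => (∑ i, X i j ^ 2) / N :=
        sum_le_card_nsmul _ _ _ fun j _ => le_sup' (fun j => (∑ i, X i j ^ 2) / N) (mem_univ j)
    _ = _ := nsmul_eq_mul _ _


open Classical in
theorem signed_varshamov_gilbert_extraction_general {n p : ℕ} (hp : 0 < p)
    (d : ℕ) (hd : 0 < d) (hdp : 5 * d ≤ p)
    (X : Matrix (Fin n) (Fin p) ℝ) :
    ∃ Ω : Finset (Fin p → ℝ),
      (∀ w ∈ Ω, (∀ j : Fin p, w j = -1 ∨ w j = 0 ∨ w j = 1) ∧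
        (Finset.univ.filter fun j : Fin p => w j ≠ 0).card = d) ∧
      ((d : ℝ) / 2) * Real.log ((p : ℝ) / (5 * d)) ≤ Real.log (Ω.card) ∧
      (∀ w ∈ Ω, ∀ w' ∈ Ω, w ≠ w' →
        (d : ℝ) < ((Finset.univ.filter fun j : Fin p => |w j| ≠ |w' j|).card : ℝ)) ∧
      (∀ w ∈ Ω, (1 / (n : ℝ)) * ∑ i, (X.mulVec w i) ^ 2 ≤
        (d : ℝ) * (Finset.univ.sup' ⟨⟨0, hp⟩, Finset.mem_univ _⟩ fun j : Fin p =>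
          (∑ i, (X i j) ^ 2) / n)) := by
  set m := p / d
  have : NeZero m := ⟨by have := (Nat.le_div_iff_mul_le hd).2 hdp; omega⟩
  let e : Fin d × Fin m ↪ Fin p :=
    finProdFinEquiv.toEmbedding.trans (Fin.castLEEmb (Nat.mul_div_le p d))
  obtain ⟨C, hCsep, hCcard⟩ := exists_hammingDist_gt_card_le (ι := Fin d) (β := Fin m) (d / 2)
  simp only [Fintype.card_fin] at hCcard
  choose w hw hXw using fun c => X.exists_abs_eq_ite_sum_mulVec_sq_le (graphFinset e c)
  have hsep : ∀ c ∈ C, ∀ c' ∈ C, c ≠ c' → d < #(univ.filter fun j => |w c j| ≠ |w c' j|) := by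
    intro c hc c' hc' hne
    rw [filter_abs_ne_eq_symmDiff_of_abs_eq_ite (hw c) (hw c'), card_graphFinset_symmDiff]
    have := hCsep c hc c' hc' hne
    omega
  have hinj : Set.InjOn w C := fun c hc c' hc' h =>
    by_contra fun hne => by simpa [h] using hsep c hc c' hc' hne
  have hsupp : ∀ c, #(graphFinset e c) = d := fun c => by rw [card_graphFinset, Fintype.card_fin]
  refine ⟨C.image w, forall_mem_image.2 fun c _ => ?_, ?_,
    forall_mem_image.2 fun c hc => forall_mem_image.2 fun c' hc' hne => ?_,
    forall_mem_image.2 fun c _ => ?_⟩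
  · rw [filter_ne_zero_eq_of_abs_eq_ite (hw c), hsupp]
    exact ⟨eq_neg_one_or_eq_zero_or_eq_one_of_abs_eq_ite (hw c), rfl⟩
  · rw [card_image_of_injOn hinj]
    exact half_mul_log_div_five_mul_le_log hd hdp hCcard
  · exact_mod_cast hsep c hc c' hc' fun h => hne (h ▸ rfl)
  · rw [← hsupp c]
    exact X.one_div_mul_sum_mulVec_sq_le_card_mul_sup' n (hXw c) _

open Classical in
/-- Signed Varshamov–Gilbert extraction. For `d ≤ p/5` and any matrix `X`,
there is a set `Ω` of `d`-sparse sign vectors with `log|Ω| ≥ (d/2) log(p/(5d))`, pairwise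
support-Hamming distance `> d`, and `(1/n)‖Xw‖² ≤ d · max_j ‖Xe_j‖²/n` for every `w ∈ Ω`. -/
theorem signed_varshamov_gilbert_extraction {n p : ℕ} (hn : 0 < n) (hp : 0 < p)
    (d : ℕ) (hd : 0 < d) (hdp : 5 * d ≤ p)
    (X : Matrix (Fin n) (Fin p) ℝ) :
    ∃ Ω : Finset (Fin p → ℝ),
      (∀ w ∈ Ω, (∀ j : Fin p, w j = -1 ∨ w j = 0 ∨ w j = 1) ∧
        (Finset.univ.filter fun j : Fin p => w j ≠ 0).card = d) ∧
      ((d : ℝ) / 2) * Real.log ((p : ℝ) / (5 * d)) ≤ Real.log (Ω.card) ∧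
      (∀ w ∈ Ω, ∀ w' ∈ Ω, w ≠ w' →
        (d : ℝ) < ((Finset.univ.filter fun j : Fin p => |w j| ≠ |w' j|).card : ℝ)) ∧
      (∀ w ∈ Ω, (1 / (n : ℝ)) * ∑ i, (X.mulVec w i) ^ 2 ≤
        (d : ℝ) * (Finset.univ.sup' ⟨⟨0, hp⟩, Finset.mem_univ _⟩ fun j : Fin p =>
          (∑ i, (X i j) ^ 2) / n)) :=
  signed_varshamov_gilbert_extraction_general hp d hd hdp X
end

section
/- Let F be the cdf of |g| for g ~ N(0,1) standard normal, and suppose p/d ≥ 3. Then F^{-1}(1 - d/p) ≥ √(2 log(2p/d) - log log(2p/d) - log(4π)). -/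
/-!
Write `Q(s) = P(g > s)`. By symmetry the hypothesis says `Q(t) ≤ d / (2p) = 1 / u` with
`u = 2p/d`. Birnbaum's bound `Q(s) ≥ φ(s) (√(s² + 4) - s) / 2` comes from the fact that
`x ↦ e^{-x²/2} (√(x² + 4) - x) / 2` tends to `0` and decreases at rate at most `e^{-x²/2}` on
`[0, ∞)`. At the point `s` of the statement the radicand is chosen so that
`φ(s) = √(2 log u) / u`, and then `s² + 2 ≤ 2 log u` makes Birnbaum's bound at least `1 / u`.
Since `Q` is strictly decreasing, `t < s` would give `Q(t) > 1 / u`.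
-/

open MeasureTheory ProbabilityTheory Real Set Filter

/-- Birnbaum's lower bound for the Mills ratio `P(g > x) / φ(x)`. -/
noncomputable def birnbaumBound (x : ℝ) : ℝ := (√(x ^ 2 + 4) - x) / 2

section Birnbaum

variable (x : ℝ)

lemma sq_sqrt_sq_add_four : √(x ^ 2 + 4) ^ 2 = x ^ 2 + 4 := sq_sqrt (by positivity)

lemma lt_sqrt_sq_add_four : x < √(x ^ 2 + 4) :=
  lt_sqrt_of_sq_lt (by linarith)

lemma birnbaumBound_pos : 0 < birnbaumBound x := by
  unfold birnbaumBound; linarith [lt_sqrt_sq_add_four x]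

lemma birnbaumBound_sq_add_mul : birnbaumBound x ^ 2 + x * birnbaumBound x = 1 := by
  unfold birnbaumBound; linear_combination sq_sqrt_sq_add_four x / 4

lemma hasDerivAt_birnbaumBound :
    HasDerivAt birnbaumBound (-birnbaumBound x / √(x ^ 2 + 4)) x := by
  have hw : 0 < √(x ^ 2 + 4) := sqrt_pos.2 (by positivity)
  have hsqrt : HasDerivAt (fun y ↦ √(y ^ 2 + 4)) (x / √(x ^ 2 + 4)) x := by
    convert ((hasDerivAt_pow 2 x).add_const 4).sqrt (by positivity) using 1
    field_simp
    ring
  refine ((hsqrt.sub (hasDerivAt_id x)).div_const 2).congr_deriv ?_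
  unfold birnbaumBound
  field_simp
  ring

lemma one_le_birnbaumBound_mul_sqrt : 1 ≤ birnbaumBound x * √(x ^ 2 + 4) := by
  have hw := sq_sqrt_sq_add_four x
  have hxw : x * √(x ^ 2 + 4) ≤ x ^ 2 + 2 := by
    nlinarith [sq_nonneg (x * √(x ^ 2 + 4) - x ^ 2 - 2), sqrt_nonneg (x ^ 2 + 4)]
  unfold birnbaumBound
  nlinarith

lemma one_le_mul_birnbaumBound {b s : ℝ} (hb : 0 ≤ b) (hsb : s ^ 2 + 2 ≤ b ^ 2) :
    1 ≤ b * birnbaumBound s := by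
  have hw := sq_sqrt_sq_add_four s
  have hbs : b * s ≤ b ^ 2 - 1 := by nlinarith [sq_nonneg (b * s - b ^ 2 + 1)]
  have : 2 + b * s ≤ b * √(s ^ 2 + 4) := by
    nlinarith [sqrt_nonneg (s ^ 2 + 4), mul_nonneg hb (sqrt_nonneg (s ^ 2 + 4))]
  unfold birnbaumBound
  linarith

end Birnbaum

lemma hasDerivAt_exp_mul_birnbaumBound (x : ℝ) :
    HasDerivAt (fun y ↦ exp (-y ^ 2 / 2) * birnbaumBound y)
      (-(exp (-x ^ 2 / 2) * (birnbaumBound x * (x + 1 / √(x ^ 2 + 4))))) x := by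
  have hexp : HasDerivAt (fun y ↦ exp (-y ^ 2 / 2)) (exp (-x ^ 2 / 2) * -x) x := by
    have : HasDerivAt (fun y : ℝ ↦ -y ^ 2 / 2) (-x) x :=
      ((hasDerivAt_pow 2 x).neg.div_const 2).congr_deriv (by ring)
    exact this.exp
  refine (hexp.mul (hasDerivAt_birnbaumBound x)).congr_deriv ?_
  ring

lemma tendsto_exp_mul_birnbaumBound_atTop :
    Tendsto (fun x ↦ exp (-x ^ 2 / 2) * birnbaumBound x) atTop (nhds 0) := by
  have hexp : Tendsto (fun x : ℝ ↦ exp (-x ^ 2 / 2)) atTop (nhds 0) := by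
    refine tendsto_exp_atBot.comp ?_
    have := (tendsto_pow_atTop two_ne_zero).atTop_div_const (by norm_num : (0 : ℝ) < 2)
    simpa [neg_div] using this
  refine squeeze_zero' (Eventually.of_forall fun x ↦ ?_) ?_ hexp
  · exact mul_nonneg (exp_pos _).le (birnbaumBound_pos x).le
  filter_upwards [eventually_ge_atTop 0] with x hx
  refine mul_le_of_le_one_right (exp_pos _).le ?_
  nlinarith [birnbaumBound_sq_add_mul x, birnbaumBound_pos x]

lemma birnbaumBound_mul_add_inv_sqrt_le_one (x : ℝ) :
    birnbaumBound x * (x + 1 / √(x ^ 2 + 4)) ≤ 1 := by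
  have hg := birnbaumBound_pos x
  have hw : 0 < √(x ^ 2 + 4) := sqrt_pos.2 (by positivity)
  have : birnbaumBound x / √(x ^ 2 + 4) ≤ birnbaumBound x ^ 2 := by
    rw [div_le_iff₀ hw]
    nlinarith [one_le_birnbaumBound_mul_sqrt x]
  linear_combination this + birnbaumBound_sq_add_mul x

lemma exp_mul_birnbaumBound_le_integral_Ioi {s : ℝ} (hs : 0 ≤ s) :
    exp (-s ^ 2 / 2) * birnbaumBound s ≤ ∫ x in Ioi s, exp (-x ^ 2 / 2) := by
  set F' := fun x ↦ -(exp (-x ^ 2 / 2) * (birnbaumBound x * (x + 1 / √(x ^ 2 + 4))))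
  have hderiv : ∀ x ∈ Ici s, HasDerivAt _ (F' x) x :=
    fun x _ ↦ hasDerivAt_exp_mul_birnbaumBound x
  have hnonpos : ∀ x ∈ Ioi s, F' x ≤ 0 := fun x hx ↦ by
    have : 0 ≤ x := hs.trans hx.out.le
    have := birnbaumBound_pos x
    simp only [F', neg_nonpos]
    positivity
  have hF' := integrableOn_Ioi_deriv_of_nonpos' hderiv hnonpos tendsto_exp_mul_birnbaumBound_atTop
  have hexp : Integrable fun x : ℝ ↦ exp (-x ^ 2 / 2) := by
    simpa [neg_div, div_eq_inv_mul] using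
      integrable_exp_neg_mul_sq (by norm_num : (0 : ℝ) < 2⁻¹)
  calc exp (-s ^ 2 / 2) * birnbaumBound s = ∫ x in Ioi s, -F' x := by
        rw [integral_neg, integral_Ioi_of_hasDerivAt_of_tendsto' hderiv hF'
          tendsto_exp_mul_birnbaumBound_atTop]
        ring
    _ ≤ ∫ x in Ioi s, exp (-x ^ 2 / 2) :=
        setIntegral_mono_on hF'.neg hexp.integrableOn measurableSet_Ioi fun x _ ↦ by
          simpa [F'] using mul_le_of_le_one_right (exp_pos _).le
            (birnbaumBound_mul_add_inv_sqrt_le_one x)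

namespace ProbabilityTheory

open scoped NNReal

lemma gaussianReal_real_Iio_neg (v : ℝ≥0) (t : ℝ) :
    (gaussianReal 0 v).real (Iio (-t)) = (gaussianReal 0 v).real (Ioi t) := by
  conv_lhs => rw [← neg_zero, ← gaussianReal_map_neg, map_measureReal_apply measurable_neg
    measurableSet_Iio]
  rw [neg_preimage, neg_Iio, neg_neg]

lemma gaussianReal_real_abs_le (v : ℝ≥0) {t : ℝ} (ht : 0 ≤ t) :
    (gaussianReal 0 v).real {x | |x| ≤ t} = 1 - 2 * (gaussianReal 0 v).real (Ioi t) := by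
  have hcompl : {x : ℝ | |x| ≤ t}ᶜ = Ioi t ∪ Iio (-t) := by
    ext x
    simp only [mem_compl_iff, mem_ofPred_eq, abs_le, mem_union, mem_Iio, mem_Ioi, not_and_or,
      not_le]
    tauto
  have hdisj : Disjoint (Ioi t) (Iio (-t)) := Ioi_disjoint_Iio_of_not_lt (by linarith)
  have := measureReal_compl (μ := gaussianReal 0 v) (s := {x : ℝ | |x| ≤ t})
    (measurableSet_le (by fun_prop) (by fun_prop))
  rw [hcompl, measureReal_union hdisj measurableSet_Iio, gaussianReal_real_Iio_neg,
    probReal_univ] at this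
  linarith

lemma gaussianReal_real_Ioi_lt_of_lt {μ : ℝ} {v : ℝ≥0} (hv : v ≠ 0) {s t : ℝ}
    (hts : t < s) :
    (gaussianReal μ v).real (Ioi s) < (gaussianReal μ v).real (Ioi t) := by
  have hpos : 0 < (gaussianReal μ v).real (Ioc t s) := by
    refine ENNReal.toReal_pos ?_ (measure_ne_top _ _)
    refine ((gaussianReal_absolutelyContinuous' μ hv).pos_mono ?_).ne'
    simpa using hts
  rw [← Ioc_union_Ioi_eq_Ioi hts.le,
    measureReal_union (Ioc_disjoint_Ioi le_rfl) measurableSet_Ioi]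
  linarith

lemma gaussianReal_real_Ioi_eq_integral (s : ℝ) :
    (gaussianReal 0 1).real (Ioi s) = (√(2 * π))⁻¹ * ∫ x in Ioi s, exp (-x ^ 2 / 2) := by
  rw [measureReal_def, gaussianReal_apply_eq_integral 0 one_ne_zero, ENNReal.toReal_ofReal
    (setIntegral_nonneg measurableSet_Ioi fun x _ ↦ gaussianPDFReal_nonneg 0 1 x),
    ← integral_const_mul]
  simp [gaussianPDFReal]

lemma birnbaumBound_le_gaussianReal_real_Ioi {s : ℝ} (hs : 0 ≤ s) :
    (√(2 * π))⁻¹ * exp (-s ^ 2 / 2) * birnbaumBound s ≤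
      (gaussianReal 0 1).real (Ioi s) := by
  rw [gaussianReal_real_Ioi_eq_integral, mul_assoc]
  gcongr
  exact exp_mul_birnbaumBound_le_integral_Ioi hs

end ProbabilityTheory

lemma two_le_log_four_mul_pi : 2 ≤ log (4 * π) := by
  rw [le_log_iff_exp_le (by positivity), show (2 : ℝ) = 1 + 1 by norm_num, exp_add]
  nlinarith [exp_one_lt_d9, exp_pos 1, pi_gt_three]

lemma inv_le_gaussianReal_real_Ioi_sqrt {u : ℝ} (hu : exp 1 ≤ u)
    (hR : 0 < 2 * log u - log (log u) - log (4 * π)) :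
    u⁻¹ ≤ (gaussianReal 0 1).real (Ioi √(2 * log u - log (log u) - log (4 * π))) := by
  set L := log u
  set R := 2 * L - log L - log (4 * π)
  set s := √R
  have hu0 : 0 < u := (exp_pos 1).trans_le hu
  have hL : 1 ≤ L := (le_log_iff_exp_le hu0).2 hu
  have hexp : exp (-s ^ 2) * u ^ 2 = 4 * π * L := by
    rw [sq_sqrt hR.le, show -R = log L + log (4 * π) - (L + L) by ring, exp_sub, exp_add,
      exp_add, exp_log (by linarith), exp_log (by positivity), exp_log hu0]
    field_simp
  set b := u * ((√(2 * π))⁻¹ * exp (-s ^ 2 / 2))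
  have hb : b ^ 2 = 2 * L := by
    have : exp (-s ^ 2 / 2) ^ 2 = exp (-s ^ 2) := by rw [← exp_nat_mul]; ring_nf
    rw [mul_pow, mul_pow, inv_pow, sq_sqrt (by positivity), this]
    field_simp
    linear_combination hexp
  have hsb : s ^ 2 + 2 ≤ b ^ 2 := by
    rw [hb, sq_sqrt hR.le]
    linarith [log_nonneg hL, two_le_log_four_mul_pi]
  calc u⁻¹ ≤ u⁻¹ * (b * birnbaumBound s) :=
        le_mul_of_one_le_right (inv_pos.2 hu0).le (one_le_mul_birnbaumBound (by positivity) hsb)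
    _ = (√(2 * π))⁻¹ * exp (-s ^ 2 / 2) * birnbaumBound s := by
        simp only [b]
        field_simp
    _ ≤ _ := birnbaumBound_le_gaussianReal_real_Ioi (sqrt_nonneg R)

/-- Quantile lower bound for the half-normal distribution: if `p/d ≥ 3`
and `t ≥ 0` satisfies `P(|g| ≤ t) ≥ 1 - d/p` for `g ~ N(0,1)`, then
`t ≥ √(2 log(2p/d) - log log(2p/d) - log(4π))`; i.e.
`F⁻¹(1 - d/p) ≥ √(2 log(2p/d) - log log(2p/d) - log(4π))`. -/
theorem half_normal_quantile_lower_bound (p d : ℕ) (hd : 0 < d) (h3 : 3 * d ≤ p)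
    (t : ℝ) (ht : 0 ≤ t)
    (hq : 1 - (d : ℝ) / p ≤ ((gaussianReal 0 1) {x : ℝ | |x| ≤ t}).toReal) :
    Real.sqrt (2 * Real.log (2 * p / d) - Real.log (Real.log (2 * p / d)) -
      Real.log (4 * Real.pi)) ≤ t := by
  have hd0 : (0 : ℝ) < d := by exact_mod_cast hd
  have hpd : 3 * (d : ℝ) ≤ p := by exact_mod_cast h3
  set u : ℝ := 2 * p / d
  have hu : exp 1 ≤ u := by
    rw [le_div_iff₀ hd0]
    nlinarith [exp_one_lt_d9]
  have htail : (gaussianReal 0 1).real (Ioi t) ≤ u⁻¹ := by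
    rw [← measureReal_def, gaussianReal_real_abs_le 1 ht] at hq
    rw [inv_div]
    linarith [show (d : ℝ) / (2 * p) = d / p / 2 by ring]
  by_contra! hts
  have hR := sqrt_pos.1 (ht.trans_lt hts)
  have hmono := gaussianReal_real_Ioi_lt_of_lt (μ := 0) one_ne_zero hts
  linarith [inv_le_gaussianReal_real_Ioi_sqrt hu hR]
end
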